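/- arXiv:1808.10616 — 13 statements merged into one kernel-verified Lean document; each statement's English description precedes it below -/
import Mathlib

section
/- Let S ⊆ ℕ be a numerical semigroup (a submonoid of ℕ) with greatest common divisor d, and let S' ⊆ ℕ be a numerical semigroup containing S with greatest common divisor d' dividing d. Define the Apéry set Ap(S',S) = {w ∈ S' : for all s ∈ S with s ≠ 0, w - s ∉ S' or w < s}. Then Ap(S',S) has at least d/d' elements. -/
/-- The Apéry set of `S'` with respect to `S`: elements of `S'` that cannot be written
as `s + w'` with `s ∈ S` nonzero and `w' ∈ S'`. -/
def apery (S' S : Set ℕ) : Set ℕ :=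
  {w | w ∈ S' ∧ ∀ s ∈ S, s ≠ 0 → ∀ w' ∈ S', w ≠ s + w'}

/-- the Apéry set of `S'` with respect to `S` has at least `d / d'` elements,
where `d = gcd S`, `d' = gcd S'` and `d' ∣ d`. -/
theorem apery_card_ge (S S' : AddSubmonoid ℕ) (hSS' : (S : Set ℕ) ⊆ (S' : Set ℕ))
    (d d' : ℕ)
    (hd1 : ∀ x ∈ S, d ∣ x) (hd2 : ∀ e : ℕ, (∀ x ∈ S, e ∣ x) → e ∣ d)
    (hd'1 : ∀ x ∈ S', d' ∣ x) (hd'2 : ∀ e : ℕ, (∀ x ∈ S', e ∣ x) → e ∣ d')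
    (hdd' : d' ∣ d) :
    ∃ F : Finset ℕ, (∀ x ∈ F, x ∈ apery (S' : Set ℕ) (S : Set ℕ)) ∧ d / d' ≤ F.card := by
  classical
  by_cases hm0 : d / d' = 0
  · exact ⟨∅, by simp, by omega⟩
  have hd'0 : d' ≠ 0 := by rintro rfl; simp at hm0
  have hd0 : d ≠ 0 := by rintro rfl; simp at hm0
  set m := d / d' with hmdef
  have hmd : m * d' = d := Nat.div_mul_cancel hdd'
  have hmpos : 0 < m := Nat.pos_of_ne_zero hm0
  -- Step 1: find a, b ∈ S' with a = b + d'
  obtain ⟨a, ha, b, hb, hab⟩ : ∃ a ∈ S', ∃ b ∈ S', a = b + d' := by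
    set D : AddSubgroup ℤ :=
      { carrier := {z : ℤ | ∃ a ∈ S', ∃ b ∈ S', z = (a : ℤ) - (b : ℤ)}
        zero_mem' := ⟨0, S'.zero_mem, 0, S'.zero_mem, by simp⟩
        add_mem' := by
          rintro x y ⟨p, hp, q, hq, rfl⟩ ⟨r, hr, t, ht, rfl⟩
          exact ⟨p + r, S'.add_mem hp hr, q + t, S'.add_mem hq ht, by push_cast; ring⟩
        neg_mem' := by
          rintro x ⟨p, hp, q, hq, rfl⟩
          exact ⟨q, hq, p, hp, by ring⟩ } with hDdef
    obtain ⟨g, hg⟩ := Int.subgroup_cyclic (AddSubgroup.closure (((↑) : ℕ → ℤ) '' (S' : Set ℕ)))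
    have hmemc : ∀ x ∈ S', (x : ℤ) ∈ AddSubgroup.closure {g} := by
      intro x hx
      rw [← hg]
      exact AddSubgroup.subset_closure ⟨x, hx, rfl⟩
    -- g.natAbs divides every element of S'
    have hgd : ∀ x ∈ S', g.natAbs ∣ x := by
      intro x hx
      have := hmemc x hx
      rw [AddSubgroup.mem_closure_singleton] at this
      obtain ⟨n, hn⟩ := this
      have : g ∣ (x : ℤ) := ⟨n, by rw [← hn]; simp [mul_comm]⟩
      simpa using Int.natAbs_dvd_natAbs.mpr this
    have h1 : g.natAbs ∣ d' := hd'2 _ hgd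
    -- d' divides g
    have h2 : d' ∣ g.natAbs := by
      have hle : AddSubgroup.closure (((↑) : ℕ → ℤ) '' (S' : Set ℕ)) ≤
          AddSubgroup.zmultiples (d' : ℤ) := by
        rw [AddSubgroup.closure_le]
        rintro z ⟨x, hx, rfl⟩
        exact Int.mem_zmultiples_iff.mpr (Int.natCast_dvd_natCast.mpr (hd'1 x hx))
      have hgmem : g ∈ AddSubgroup.zmultiples (d' : ℤ) := by
        apply hle
        rw [hg]
        exact AddSubgroup.subset_closure rfl
      have : (d' : ℤ) ∣ g := Int.mem_zmultiples_iff.mp hgmem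
      simpa using Int.natAbs_dvd_natAbs.mpr this
    have heq : g.natAbs = d' := Nat.dvd_antisymm h1 h2
    -- d' ∈ closure, hence in D
    have hcl : AddSubgroup.closure (((↑) : ℕ → ℤ) '' (S' : Set ℕ)) ≤ D := by
      rw [AddSubgroup.closure_le]
      rintro z ⟨x, hx, rfl⟩
      exact ⟨x, hx, 0, S'.zero_mem, by simp⟩
    have hgD : g ∈ D := by
      apply hcl
      rw [hg]
      exact AddSubgroup.subset_closure rfl
    have hd'D : (d' : ℤ) ∈ D := by
      rcases Int.natAbs_eq g with h | h
      · rw [← heq, ← h]; exact hgD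
      · rw [← heq]
        have : -g ∈ D := D.neg_mem hgD
        rwa [h, neg_neg] at this
    obtain ⟨p, hp, q, hq, hpq⟩ := hd'D
    exact ⟨p, hp, q, hq, by omega⟩
  -- Step 2: existence of elements in each residue class m*b + k*d' mod d
  have hex : ∀ k : ℕ, ∃ x, x ∈ (S' : Set ℕ) ∧ x % d = (m * b + k * d') % d := by
    intro k
    have hk : k % m < m := Nat.mod_lt _ hmpos
    refine ⟨(k % m) * a + (m - k % m) * b, ?_, ?_⟩
    · exact S'.add_mem (S'.nsmul_mem ha (k % m)) (S'.nsmul_mem hb (m - k % m))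
    · have hval : (k % m) * a + (m - k % m) * b = m * b + (k % m) * d' := by
        have h1 : (k % m) * b ≤ m * b := Nat.mul_le_mul_right _ hk.le
        rw [hab, Nat.mul_add, Nat.sub_mul]
        omega
      rw [hval]
      have hkd : k * d' = (k % m) * d' + (k / m) * d := by
        rw [← hmd]
        conv_lhs => rw [← Nat.mod_add_div k m]
        ring
      rw [Nat.add_mod (m * b), Nat.add_mod (m * b) (k * d'), hkd,
        Nat.add_mul_mod_self_right]
  -- Step 3: minimal elements are Apéry elements
  have hap : ∀ k : ℕ, Nat.find (hex k) ∈ apery (S' : Set ℕ) (S : Set ℕ) := by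
    intro k
    obtain ⟨hw1, hw2⟩ := Nat.find_spec (hex k)
    refine ⟨hw1, ?_⟩
    intro s hs hs0 w' hw' heq
    obtain ⟨c, hc⟩ := hd1 s hs
    have hw'mod : w' % d = (m * b + k * d') % d := by
      rw [heq, hc] at hw2
      rwa [Nat.mul_add_mod] at hw2
    have hlt : w' < Nat.find (hex k) := by
      have : 0 < s := Nat.pos_of_ne_zero hs0
      omega
    exact Nat.find_min (hex k) hlt ⟨hw', hw'mod⟩
  -- Step 4: injectivity
  have hinj : ∀ k < m, ∀ j < m, Nat.find (hex k) = Nat.find (hex j) → k = j := by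
    have key : ∀ k j, k ≤ j → j < m →
        (m * b + k * d') % d = (m * b + j * d') % d → k = j := by
      intro k j hkj hj hmod
      have hle : m * b + k * d' ≤ m * b + j * d' :=
        Nat.add_le_add_left (Nat.mul_le_mul_right _ hkj) _
      have hdvd : d ∣ (m * b + j * d') - (m * b + k * d') :=
        (Nat.modEq_iff_dvd' hle).mp hmod
      have hsub : (m * b + j * d') - (m * b + k * d') = (j - k) * d' := by
        rw [Nat.sub_mul]; omega
      rw [hsub] at hdvd
      have hlt : (j - k) * d' < d := by
        rw [← hmd]
        exact (Nat.mul_lt_mul_right (Nat.pos_of_ne_zero hd'0)).mpr (by omega)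
      have := Nat.eq_zero_of_dvd_of_lt hdvd hlt
      have : j - k = 0 := by
        rcases Nat.mul_eq_zero.mp this with h | h
        · exact h
        · exact absurd h hd'0
      omega
    intro k hk j hj he
    have h1 := (Nat.find_spec (hex k)).2
    have h2 := (Nat.find_spec (hex j)).2
    rw [he] at h1
    have hmod : (m * b + k * d') % d = (m * b + j * d') % d := by omega
    rcases le_total k j with hle | hle
    · exact key k j hle hj hmod
    · exact (key j k hle hk hmod.symm).symm
  refine ⟨(Finset.range m).image (fun k => Nat.find (hex k)), ?_, ?_⟩
  · intro x hx
    simp only [Finset.mem_image, Finset.mem_range] at hx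
    obtain ⟨k, _, rfl⟩ := hx
    exact hap k
  · rw [Finset.card_image_of_injOn, Finset.card_range]
    intro k hk j hj he
    simp only [Finset.coe_range, Set.mem_Iio] at hk hj
    exact hinj k hk j hj he
end

section
/- Let S ⊆ S' ⊆ ℕ be numerical semigroups with gcd(S) = d and gcd(S') = 1. If every element of S' has a unique representation as s + w with s ∈ S and w ∈ Ap(S',S), then S = S' ∩ dℤ. -/
/-- The subgroup of differences of elements of an additive submonoid of ℕ. -/
def diffGroup (S : AddSubmonoid ℕ) : AddSubgroup ℤ where
  carrier := {n | ∃ a ∈ S, ∃ b ∈ S, n = (a : ℤ) - (b : ℤ)}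
  zero_mem' := ⟨0, S.zero_mem, 0, S.zero_mem, by ring⟩
  add_mem' := by
    rintro x y ⟨a, ha, b, hb, rfl⟩ ⟨c, hc, e, he, rfl⟩
    exact ⟨a + c, S.add_mem ha hc, b + e, S.add_mem hb he, by push_cast; ring⟩
  neg_mem' := by
    rintro x ⟨a, ha, b, hb, rfl⟩
    exact ⟨b, hb, a, ha, by ring⟩

/-- if every element of `S'` has a unique representation `s + w` with `s ∈ S`
and `w` Apéry, then `S = S' ∩ dℤ` where `d = gcd S` and `gcd S' = 1`. -/
theorem flat_implies_inter (S S' : AddSubmonoid ℕ)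
    (hSS' : (S : Set ℕ) ⊆ (S' : Set ℕ)) (d : ℕ)
    (hd1 : ∀ x ∈ S, d ∣ x) (hd2 : ∀ e : ℕ, (∀ x ∈ S, e ∣ x) → e ∣ d)
    (hS' : ∀ e : ℕ, (∀ x ∈ S', e ∣ x) → e ∣ 1)
    (hflat : ∀ x ∈ S', ∃! p : ℕ × ℕ,
      p.1 ∈ S ∧ p.2 ∈ apery (S' : Set ℕ) (S : Set ℕ) ∧ x = p.1 + p.2) :
    (S : Set ℕ) = {x | x ∈ S' ∧ d ∣ x} := by
  ext x
  simp only [Set.mem_setOf_eq, SetLike.mem_coe]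
  constructor
  · exact fun hx => ⟨hSS' hx, hd1 x hx⟩
  · rintro ⟨hx', hdx⟩
    obtain ⟨⟨s, w⟩, ⟨hs, hw, hxsw⟩, _⟩ := hflat x hx'
    -- d divides w
    have hds : d ∣ s := hd1 s hs
    have hdw : d ∣ w := (Nat.dvd_add_right hds).mp (hxsw ▸ hdx)
    -- 0 is in the Apéry set
    have h0 : (0 : ℕ) ∈ apery (S' : Set ℕ) (S : Set ℕ) := by
      refine ⟨S'.zero_mem, fun t ht ht0 w' hw' h => ?_⟩
      omega
    -- the difference subgroup is cyclic, generated by some g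
    obtain ⟨g, hG⟩ := Int.subgroup_cyclic (diffGroup S)
    have hmem : ∀ n : ℤ, n ∈ diffGroup S ↔ (g : ℤ) ∣ n := by
      intro n
      rw [hG, AddSubgroup.mem_closure_singleton]
      constructor
      · rintro ⟨k, rfl⟩; exact ⟨k, by rw [smul_eq_mul]; ring⟩
      · rintro ⟨k, rfl⟩; exact ⟨k, by rw [smul_eq_mul]; ring⟩
    -- g divides every element of S, hence g.natAbs ∣ d
    have hgS : ∀ y ∈ S, (g.natAbs : ℕ) ∣ y := by
      intro y hy
      have : (y : ℤ) ∈ diffGroup S := ⟨y, hy, 0, S.zero_mem, by ring⟩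
      have := (hmem y).mp this
      exact Int.ofNat_dvd.mp (Int.natAbs_dvd.mpr this)
    have hgd : g.natAbs ∣ d := hd2 _ hgS
    -- hence g ∣ w, so w ∈ diffGroup S : w = a - b with a, b ∈ S
    have hgw : (g : ℤ) ∣ (w : ℤ) := by
      have : (g.natAbs : ℕ) ∣ w := hgd.trans hdw
      exact Int.natAbs_dvd.mp (Int.ofNat_dvd.mpr this)
    obtain ⟨a, ha, b, hb, hab⟩ := (hmem w).mpr hgw
    have habw : a = b + w := by omega
    -- two representations of a : (a, 0) and (b, w); uniqueness gives w = 0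
    obtain ⟨p, _, hu⟩ := hflat a (hSS' ha)
    have h1 : ((a, 0) : ℕ × ℕ) = p := hu (a, 0) ⟨ha, h0, by simp⟩
    have h2 : ((b, w) : ℕ × ℕ) = p := hu (b, w) ⟨hb, hw, habw⟩
    have hw0 : w = 0 := by
      have := h1.trans h2.symm
      exact (Prod.ext_iff.mp this).2.symm
    subst hw0
    simpa [hxsw] using hs
end

section
/- Let S ⊆ ℕ be a numerical semigroup with gcd(S) = 1, and let s, m be coprime positive integers. Consider the semigroup T ⊆ (1/m)ℕ generated by S and s/m (equivalently, the semigroup mS + sℕ inside ℕ after scaling by m). Then every element of mS + sℕ has a unique representation as an element of mS plus a multiple ks with 0 ≤ k < m and ks an Apéry number, if and only if s ∈ S. -/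
/-- The scaled semigroup `mS`. -/
def scaleS (S : AddSubmonoid ℕ) (m : ℕ) : Set ℕ := {x | ∃ y ∈ S, x = m * y}

/-- The semigroup `mS + sℕ`. -/
def extS (S : AddSubmonoid ℕ) (m s : ℕ) : Set ℕ := {x | ∃ y ∈ S, ∃ k : ℕ, x = m * y + k * s}

lemma aux_key (m s : ℕ) (hm : 0 < m) (hcop : Nat.Coprime s m)
    (a b k k' : ℕ) (hle : k ≤ k') (hk' : k' < m)
    (h : m * a + k * s = m * b + k' * s) : k = k' ∧ a = b := by
  obtain ⟨d, rfl⟩ := Nat.le.dest hle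
  rw [add_mul] at h
  have h' : m * a = m * b + d * s := by omega
  have hba : b ≤ a := Nat.le_of_mul_le_mul_left (by omega) hm
  obtain ⟨e, rfl⟩ := Nat.le.dest hba
  rw [mul_add] at h'
  have he : m * e = d * s := by omega
  have hdvd : m ∣ d := (hcop.symm).dvd_of_dvd_mul_right ⟨e, he.symm⟩
  have hd0 : d = 0 := Nat.eq_zero_of_dvd_of_lt hdvd (by omega)
  subst hd0
  have hme : m * e = 0 := by simpa using he
  have he0 : e = 0 := by
    rcases Nat.mul_eq_zero.mp hme with h | h
    · omega
    · exact h
  omega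

lemma aux_apery (S : AddSubmonoid ℕ) (m s : ℕ) (hm : 0 < m) (hs : 0 < s)
    (hcop : Nat.Coprime s m) (r : ℕ) (hr : r < m) :
    r * s ∈ apery (extS S m s) (scaleS S m) := by
  refine ⟨⟨0, S.zero_mem, r, by ring⟩, ?_⟩
  rintro a ⟨y', hy', rfl⟩ hne w' ⟨y'', hy'', k', rfl⟩ heq
  have hk'r : k' ≤ r := by
    have h1 : k' * s ≤ r * s := by omega
    exact Nat.le_of_mul_le_mul_right h1 hs
  have h : m * (y' + y'') + k' * s = m * 0 + r * s := by
    rw [mul_add, mul_zero]; omega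
  obtain ⟨h1, h2⟩ := aux_key m s hm hcop (y' + y'') 0 k' r hk'r hr h
  have hy0 : y' = 0 := by omega
  exact hne (by rw [hy0, mul_zero])

/-- for `gcd S = 1` and coprime `s, m`, every element of `mS + sℕ` has a
unique representation as an element of `mS` plus a multiple `k·s`, `0 ≤ k < m`, with `k·s`
Apéry, if and only if `s ∈ S`. -/
theorem flat_one_root_iff (S : AddSubmonoid ℕ)
    (hgcd : ∀ e : ℕ, (∀ x ∈ S, e ∣ x) → e ∣ 1)
    (s m : ℕ) (hs : 0 < s) (hm : 0 < m) (hcop : Nat.Coprime s m) :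
    (∀ x ∈ extS S m s, ∃! p : ℕ × ℕ,
        p.1 ∈ scaleS S m ∧ p.2 < m ∧ p.2 * s ∈ apery (extS S m s) (scaleS S m) ∧
          x = p.1 + p.2 * s) ↔ s ∈ S := by
  constructor
  · intro h
    obtain ⟨⟨p1, p2⟩, ⟨⟨y, hy, hp1⟩, hp2, _, hx⟩, _⟩ :=
      h (m * s) ⟨0, S.zero_mem, m, by ring⟩
    rw [hp1] at hx
    have h' : m * s + 0 * s = m * y + p2 * s := by rw [zero_mul, add_zero]; exact hx
    obtain ⟨_, h2⟩ := aux_key m s hm hcop s y 0 p2 (Nat.zero_le _) hp2 h'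
    exact h2 ▸ hy
  · rintro hsS x ⟨y, hy, k, rfl⟩
    refine ⟨(m * (y + k / m * s), k % m), ⟨⟨y + k / m * s, S.add_mem hy ?_, rfl⟩,
      Nat.mod_lt _ hm, aux_apery S m s hm hs hcop _ (Nat.mod_lt _ hm), ?_⟩, ?_⟩
    · simpa [nsmul_eq_mul] using S.nsmul_mem hsS (k / m)
    · conv_lhs => rw [← Nat.div_add_mod k m]
      ring
    · rintro ⟨a1, a2⟩ ⟨⟨b, hb, rfl⟩, ha2, _, hxa⟩
      have hx2 : m * (y + k / m * s) + k % m * s = m * b + a2 * s := by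
        rw [← hxa]
        conv_rhs => rw [← Nat.div_add_mod k m]
        ring
      rcases le_total a2 (k % m) with hle | hle
      · obtain ⟨h1, h2⟩ :=
          aux_key m s hm hcop b (y + k / m * s) a2 (k % m) hle (Nat.mod_lt _ hm) hx2.symm
        simp [h1, h2]
      · obtain ⟨h1, h2⟩ := aux_key m s hm hcop (y + k / m * s) b (k % m) a2 hle ha2 hx2
        simp [← h1, ← h2]
end

section
/- Let S ⊆ ℕ be a numerical semigroup with gcd(S) = 1 and let S' be a numerical semigroup with S ⊊ S' ⊆ ℕ. Then there exists an element of S' admitting two distinct representations s₁ + w₁ = s₂ + w₂ with s₁, s₂ ∈ S, w₁, w₂ ∈ Ap(S',S), and (s₁, w₁) ≠ (s₂, w₂). Equivalently, the algebra κ[[u^{S'}]]/κ[[u^S]] is not flat. -/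
/-- From gcd 1 we get two consecutive elements of `S`. -/
lemma exists_consec (S : AddSubmonoid ℕ)
    (hgcd : ∀ e : ℕ, (∀ x ∈ S, e ∣ x) → e ∣ 1) :
    ∃ a ∈ S, ∃ b ∈ S, a = b + 1 := by
  set T : Set ℕ := {d | 0 < d ∧ ∃ a ∈ (S : Set ℕ), ∃ b ∈ (S : Set ℕ), a = b + d} with hT
  have hTne : T.Nonempty := by
    by_contra hempty
    have hall : ∀ x ∈ S, x = 0 := by
      intro x hx
      by_contra hx0
      exact hempty ⟨x, Nat.pos_of_ne_zero hx0, x, hx, 0, S.zero_mem, by omega⟩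
    have := hgcd 2 (fun x hx => by rw [hall x hx]; exact dvd_zero 2)
    omega
  set d := sInf T with hd
  obtain ⟨hdpos, a, ha, b, hb, hab⟩ : d ∈ T := Nat.sInf_mem hTne
  have hddvd : ∀ x ∈ S, d ∣ x := by
    intro x hx
    set q := x / d with hq
    set r := x % d with hr
    have hrd : r < d := Nat.mod_lt _ hdpos
    have hxd : q * d + r = x := by rw [Nat.mul_comm q d]; exact Nat.div_add_mod x d
    by_contra hnd
    have hr0 : 0 < r := by
      rcases Nat.eq_zero_or_pos r with h | h
      · exact absurd (Nat.dvd_of_mod_eq_zero (by omega)) hnd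
      · exact h
    -- x + q * b = q * a + r
    have key : x + q * b = q * a + r := by
      have : q * a = q * b + q * d := by rw [hab]; ring
      omega
    have h1 : x + q * b ∈ S := S.add_mem hx (by simpa [smul_eq_mul] using S.nsmul_mem hb q)
    have h2 : q * a ∈ S := by simpa [smul_eq_mul] using S.nsmul_mem ha q
    have : r ∈ T := ⟨hr0, x + q * b, h1, q * a, h2, key⟩
    exact absurd (Nat.sInf_le this) (by omega)
  have : d ∣ 1 := hgcd d hddvd
  have : d = 1 := Nat.dvd_one.mp this
  exact ⟨a, ha, b, hb, by omega⟩

/-- `S` is cofinite. -/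
lemma cofinite (S : AddSubmonoid ℕ)
    (hgcd : ∀ e : ℕ, (∀ x ∈ S, e ∣ x) → e ∣ 1) :
    ∃ N : ℕ, ∀ n ≥ N, n ∈ S := by
  obtain ⟨a, ha, b, hb, hab⟩ := exists_consec S hgcd
  refine ⟨b * b, fun n hn => ?_⟩
  rcases Nat.eq_zero_or_pos b with hb0 | hbpos
  · have ha1 : a = 1 := by omega
    have : n • a ∈ S := S.nsmul_mem ha n
    simpa [ha1, smul_eq_mul] using this
  · set q := n / b with hq
    set r := n % b with hr
    have hrb : r < b := Nat.mod_lt _ hbpos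
    have hnb : q * b + r = n := by rw [Nat.mul_comm q b]; exact Nat.div_add_mod n b
    have hqb : b ≤ q := Nat.le_div_iff_mul_le hbpos |>.mpr (by nlinarith)
    have hrq : r ≤ q := by omega
    set k := q - r with hk
    have hqk : q = k + r := by omega
    have heq : r * a + k * b = n := by
      have : r * a = r * b + r := by rw [hab]; ring
      nlinarith
    have h1 : r * a ∈ S := by simpa [smul_eq_mul] using S.nsmul_mem ha r
    have h2 : k * b ∈ S := by simpa [smul_eq_mul] using S.nsmul_mem hb k
    have := S.add_mem h1 h2
    rwa [heq] at this

/-- if `gcd S = 1` and `S ⊊ S' ⊆ ℕ`, some element of `S'` has two distinct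
representations `s + w` with `s ∈ S` and `w` Apéry: the algebra is not flat. -/
theorem not_flat_of_strict (S S' : AddSubmonoid ℕ)
    (hgcd : ∀ e : ℕ, (∀ x ∈ S, e ∣ x) → e ∣ 1)
    (hlt : S < S') :
    ∃ s₁ w₁ s₂ w₂ : ℕ, s₁ ∈ S ∧ s₂ ∈ S ∧
      w₁ ∈ apery (S' : Set ℕ) (S : Set ℕ) ∧ w₂ ∈ apery (S' : Set ℕ) (S : Set ℕ) ∧
      s₁ + w₁ = s₂ + w₂ ∧ (s₁, w₁) ≠ (s₂, w₂) := by
  obtain ⟨N, hN⟩ := cofinite S hgcd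
  -- pick a minimal element of S' \ S
  have hex : ∃ x, x ∈ S' ∧ x ∉ S := by
    obtain ⟨x, hx1, hx2⟩ := SetLike.exists_of_lt hlt
    exact ⟨x, hx1, hx2⟩
  classical
  set x := Nat.find hex with hx
  obtain ⟨hxS', hxS⟩ : x ∈ S' ∧ x ∉ S := Nat.find_spec hex
  have hxmin : ∀ y < x, y ∈ S' → y ∈ S := by
    intro y hy hyS'
    by_contra hyS
    have : Nat.find hex ≤ y := Nat.find_le (⟨hyS', hyS⟩ : y ∈ S' ∧ y ∉ S)
    omega
  have hxapery : x ∈ apery (S' : Set ℕ) (S : Set ℕ) := by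
    simp only [apery, Set.mem_setOf_eq, SetLike.mem_coe]
    refine ⟨hxS', fun s hs hs0 w' hw' hcontra => ?_⟩
    have hw'S : w' ∈ S := hxmin w' (by omega) hw'
    exact hxS (hcontra ▸ S.add_mem hs hw'S)
  have hx0 : x ≠ 0 := fun h => hxS (h ▸ S.zero_mem)
  have h0apery : (0 : ℕ) ∈ apery (S' : Set ℕ) (S : Set ℕ) := by
    simp only [apery, Set.mem_setOf_eq, SetLike.mem_coe]
    exact ⟨S'.zero_mem, fun s hs hs0 w' hw' h => by omega⟩
  refine ⟨N, x, N + x, 0, hN N le_rfl, hN (N + x) (by omega), hxapery, h0apery, by omega, ?_⟩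
  simp only [ne_eq, Prod.mk.injEq, not_and]
  intro _; omega
end

section
/- Let s₁, s₂ be coprime positive integers and let a₁, a₂ be positive integers such that a₁ divides s₂ and a₂ divides s₁. Let S = ⟨a₁s₁, a₂s₂⟩ and S' = S + ⟨s₁, s₂⟩ = ⟨s₁, s₂⟩. Then the Apéry set Ap(S',S) is exactly {r₁s₁ + r₂s₂ : 0 ≤ r₁ < a₁, 0 ≤ r₂ < a₂}, these a₁a₂ elements are pairwise distinct, and every element of S' has a unique representation as an element of S plus an Apéry number. -/
lemma memP {a b x : ℕ} :
    x ∈ AddSubmonoid.closure ({a, b} : Set ℕ) ↔ ∃ m n : ℕ, x = m * a + n * b := by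
  rw [AddSubmonoid.mem_closure_pair]
  simp [smul_eq_mul, eq_comm]

lemma key_dvd {s₁ s₂ : ℕ} (hcop : Nat.Coprime s₁ s₂)
    {m n m' n' : ℕ} (h : m * s₁ + n * s₂ = m' * s₁ + n' * s₂) (hm : m' ≤ m) :
    s₂ ∣ m - m' ∧ (m - m') * s₁ = (n' - n) * s₂ := by
  have h1 : m' * s₁ ≤ m * s₁ := Nat.mul_le_mul_right _ hm
  have e : (m - m') * s₁ = (n' - n) * s₂ := by
    rw [Nat.sub_mul, Nat.sub_mul]; omega
  exact ⟨hcop.symm.dvd_of_dvd_mul_right ⟨n' - n, by rw [e, Nat.mul_comm]⟩, e⟩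

lemma mod_eq_of_eq {s₁ s₂ a₁ : ℕ} (hcop : Nat.Coprime s₁ s₂) (hd₁ : a₁ ∣ s₂)
    {m n m' n' : ℕ} (h : m * s₁ + n * s₂ = m' * s₁ + n' * s₂) : m % a₁ = m' % a₁ := by
  rcases le_total m' m with hm | hm
  · have := (key_dvd hcop h hm).1
    exact ((Nat.modEq_iff_dvd' hm).mpr (hd₁.trans this)).symm
  · have := (key_dvd hcop h.symm hm).1
    exact (Nat.modEq_iff_dvd' hm).mpr (hd₁.trans this)

lemma no_bigger1 {s₁ s₂ a₁ a₂ : ℕ} (hs₂ : 0 < s₂) (hcop : Nat.Coprime s₁ s₂)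
    (ha2s1 : a₂ ≤ s₁) {r₁ r₂ M N : ℕ} (h1 : r₁ < a₁) (h2 : r₂ < a₂)
    (heq : r₁ * s₁ + r₂ * s₂ = M * s₁ + N * s₂) (hM : a₁ ≤ M) : False := by
  have hm : r₁ ≤ M := by omega
  obtain ⟨hdvd, e⟩ := key_dvd hcop heq.symm hm
  have hpos : 0 < M - r₁ := by omega
  have hge : s₂ ≤ M - r₁ := Nat.le_of_dvd hpos hdvd
  have h3 : s₁ * s₂ ≤ (r₂ - N) * s₂ := by
    calc s₁ * s₂ = s₂ * s₁ := Nat.mul_comm _ _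
    _ ≤ (M - r₁) * s₁ := Nat.mul_le_mul_right _ hge
    _ = (r₂ - N) * s₂ := e
  have h4 : s₁ ≤ r₂ - N := Nat.le_of_mul_le_mul_right h3 hs₂
  omega

lemma split_mul {a₁ s₁ : ℕ} (m : ℕ) :
    m * s₁ = (m / a₁) * (a₁ * s₁) + (m % a₁) * s₁ := by
  have h : m = a₁ * (m / a₁) + m % a₁ := (Nat.div_add_mod m a₁).symm
  calc m * s₁ = (a₁ * (m / a₁) + m % a₁) * s₁ := by rw [← h]
  _ = (m / a₁) * (a₁ * s₁) + (m % a₁) * s₁ := by ring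

/-- for coprime `s₁, s₂` and `a₁ ∣ s₂`, `a₂ ∣ s₁`, the Apéry set of
`⟨s₁,s₂⟩` over `⟨a₁s₁, a₂s₂⟩` is the rectangle `{r₁s₁ + r₂s₂ : rᵢ < aᵢ}`, its elements
are pairwise distinct, and representations are unique. -/
theorem rectangle_two_generators (s₁ s₂ a₁ a₂ : ℕ)
    (hs₁ : 0 < s₁) (hs₂ : 0 < s₂) (hcop : Nat.Coprime s₁ s₂)
    (ha₁ : 0 < a₁) (ha₂ : 0 < a₂) (hd₁ : a₁ ∣ s₂) (hd₂ : a₂ ∣ s₁) :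
    apery (AddSubmonoid.closure ({s₁, s₂} : Set ℕ) : Set ℕ)
        (AddSubmonoid.closure ({a₁ * s₁, a₂ * s₂} : Set ℕ) : Set ℕ)
      = {w | ∃ r₁ < a₁, ∃ r₂ < a₂, w = r₁ * s₁ + r₂ * s₂} ∧
    (∀ r₁ < a₁, ∀ r₂ < a₂, ∀ r₁' < a₁, ∀ r₂' < a₂,
      r₁ * s₁ + r₂ * s₂ = r₁' * s₁ + r₂' * s₂ → r₁ = r₁' ∧ r₂ = r₂') ∧
    (∀ x ∈ AddSubmonoid.closure ({s₁, s₂} : Set ℕ), ∃! p : ℕ × ℕ,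
      p.1 ∈ AddSubmonoid.closure ({a₁ * s₁, a₂ * s₂} : Set ℕ) ∧
      p.2 ∈ apery (AddSubmonoid.closure ({s₁, s₂} : Set ℕ) : Set ℕ)
        (AddSubmonoid.closure ({a₁ * s₁, a₂ * s₂} : Set ℕ) : Set ℕ) ∧
      x = p.1 + p.2) := by
  have ha1s2 : a₁ ≤ s₂ := Nat.le_of_dvd hs₂ hd₁
  have ha2s1 : a₂ ≤ s₁ := Nat.le_of_dvd hs₁ hd₂
  have distinct : ∀ r₁ < a₁, ∀ r₂ < a₂, ∀ r₁' < a₁, ∀ r₂' < a₂,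
      r₁ * s₁ + r₂ * s₂ = r₁' * s₁ + r₂' * s₂ → r₁ = r₁' ∧ r₂ = r₂' := by
    intro r₁ h1 r₂ h2 r₁' h1' r₂' h2' heq
    have e1 : r₁ % a₁ = r₁' % a₁ := mod_eq_of_eq hcop hd₁ heq
    rw [Nat.mod_eq_of_lt h1, Nat.mod_eq_of_lt h1'] at e1
    have heq' : r₂ * s₂ + r₁ * s₁ = r₂' * s₂ + r₁' * s₁ := by omega
    have e2 : r₂ % a₂ = r₂' % a₂ := mod_eq_of_eq hcop.symm hd₂ heq'
    rw [Nat.mod_eq_of_lt h2, Nat.mod_eq_of_lt h2'] at e2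
    exact ⟨e1, e2⟩
  have hrect : apery (AddSubmonoid.closure ({s₁, s₂} : Set ℕ) : Set ℕ)
        (AddSubmonoid.closure ({a₁ * s₁, a₂ * s₂} : Set ℕ) : Set ℕ)
      = {w | ∃ r₁ < a₁, ∃ r₂ < a₂, w = r₁ * s₁ + r₂ * s₂} := by
    ext w
    constructor
    · rintro ⟨hw, hap⟩
      obtain ⟨m, n, rfl⟩ := memP.mp hw
      have hma : m < a₁ := by
        by_contra hma
        push_neg at hma
        refine hap (a₁ * s₁) (AddSubmonoid.subset_closure (by simp)) (by positivity)
          ((m - a₁) * s₁ + n * s₂) (memP.mpr ⟨m - a₁, n, rfl⟩) ?_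
        have : a₁ * s₁ ≤ m * s₁ := Nat.mul_le_mul_right _ hma
        rw [Nat.sub_mul]; omega
      have hna : n < a₂ := by
        by_contra hna
        push_neg at hna
        refine hap (a₂ * s₂) (AddSubmonoid.subset_closure (by simp)) (by positivity)
          (m * s₁ + (n - a₂) * s₂) (memP.mpr ⟨m, n - a₂, rfl⟩) ?_
        have : a₂ * s₂ ≤ n * s₂ := Nat.mul_le_mul_right _ hna
        rw [Nat.sub_mul]; omega
      exact ⟨m, hma, n, hna, rfl⟩
    · rintro ⟨r₁, h1, r₂, h2, rfl⟩
      refine ⟨memP.mpr ⟨r₁, r₂, rfl⟩, ?_⟩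
      rintro s hs hs0 w' hw' heq
      obtain ⟨k, l, rfl⟩ := memP.mp hs
      obtain ⟨m, n, rfl⟩ := memP.mp hw'
      have heq' : r₁ * s₁ + r₂ * s₂ = (k * a₁ + m) * s₁ + (l * a₂ + n) * s₂ := by
        rw [Nat.add_mul, Nat.add_mul, Nat.mul_assoc, Nat.mul_assoc]
        omega
      have hkl : 0 < k ∨ 0 < l := by
        rcases Nat.eq_zero_or_pos k with rfl | hk
        · rcases Nat.eq_zero_or_pos l with rfl | hl
          · simp at hs0
          · exact Or.inr hl
        · exact Or.inl hk
      rcases hkl with hk | hl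
      · exact no_bigger1 hs₂ hcop ha2s1 h1 h2 heq' (by nlinarith)
      · have heq'' : r₂ * s₂ + r₁ * s₁ = (l * a₂ + n) * s₂ + (k * a₁ + m) * s₁ := by omega
        exact no_bigger1 hs₁ hcop.symm ha1s2 h2 h1 heq'' (by nlinarith)
  refine ⟨hrect, distinct, ?_⟩
  intro x hx
  obtain ⟨m, n, rfl⟩ := memP.mp hx
  refine ⟨((m / a₁) * (a₁ * s₁) + (n / a₂) * (a₂ * s₂), (m % a₁) * s₁ + (n % a₂) * s₂),
    ⟨memP.mpr ⟨m / a₁, n / a₂, rfl⟩, ?_, ?_⟩, ?_⟩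
  · rw [hrect]
    exact ⟨m % a₁, Nat.mod_lt _ ha₁, n % a₂, Nat.mod_lt _ ha₂, rfl⟩
  · simp only
    rw [split_mul (a₁ := a₁) m, split_mul (a₁ := a₂) n]
    ring
  · rintro ⟨q1, q2⟩ ⟨hq1, hq2, hqx⟩
    simp only at hqx ⊢
    rw [hrect] at hq2
    obtain ⟨r₁, hr₁, r₂, hr₂, rfl⟩ := hq2
    obtain ⟨k, l, rfl⟩ := memP.mp hq1
    have heq : (k * a₁ + r₁) * s₁ + (l * a₂ + r₂) * s₂ = m * s₁ + n * s₂ := by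
      rw [Nat.add_mul, Nat.add_mul, Nat.mul_assoc, Nat.mul_assoc]
      omega
    have e1 : (k * a₁ + r₁) % a₁ = m % a₁ := mod_eq_of_eq hcop hd₁ heq
    rw [Nat.mul_add_mod' k a₁ r₁, Nat.mod_eq_of_lt hr₁] at e1
    have heq' : (l * a₂ + r₂) * s₂ + (k * a₁ + r₁) * s₁ = n * s₂ + m * s₁ := by omega
    have e2 : (l * a₂ + r₂) % a₂ = n % a₂ := mod_eq_of_eq hcop.symm hd₂ heq'
    rw [Nat.mul_add_mod' l a₂ r₂, Nat.mod_eq_of_lt hr₂] at e2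
    have hw : r₁ * s₁ + r₂ * s₂ = (m % a₁) * s₁ + (n % a₂) * s₂ := by rw [e1, e2]
    have hfst : k * (a₁ * s₁) + l * (a₂ * s₂)
        = (m / a₁) * (a₁ * s₁) + (n / a₂) * (a₂ * s₂) := by
      have := split_mul (a₁ := a₁) (s₁ := s₁) m
      have := split_mul (a₁ := a₂) (s₁ := s₂) n
      omega
    exact Prod.ext hfst hw
end

section
/- Let s₁, s₂ be coprime positive integers and let S be a numerical semigroup with S ⊆ ⟨s₁, s₂⟩, such that the algebra corresponding to the extension S ⊆ ⟨s₁, s₂⟩ is flat (every element of ⟨s₁, s₂⟩ has a unique representation as an element of S plus an Apéry number). Then S is either generated by a single element, or S is generated by a₁s₁ and a₂s₂ for some positive integers a₁, a₂ with a₁ ∣ s₂ and a₂ ∣ s₁. -/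
def IsFlat (S T : AddSubmonoid ℕ) : Prop :=
  ∀ x ∈ T, ∃! p : ℕ × ℕ, p.1 ∈ S ∧ p.2 ∈ apery (T : Set ℕ) (S : Set ℕ) ∧ x = p.1 + p.2

theorem zero_mem_apery {S' S : Set ℕ} (h : 0 ∈ S') : 0 ∈ apery S' S :=
  ⟨h, fun _ _ hs _ _ h => hs (by omega)⟩

namespace IsFlat

variable {S T : AddSubmonoid ℕ}

theorem apery_eq_of_modEq (hflat : IsFlat S T) (hST : S ≤ T) {w w' : ℕ}
    (hw : w ∈ apery T S) (hw' : w' ∈ apery T S) (hmod : w ≡ w' [MOD Nat.setGcd S]) : w = w' := by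
  wlog hle : w ≤ w' generalizing w w'
  · exact (this hw' hw hmod.symm (by omega)).symm
  obtain ⟨k, rfl⟩ := Nat.exists_eq_add_of_le hle
  have hk : Nat.setGcd S ∣ k := by simpa using (Nat.modEq_iff_dvd' hle).1 hmod
  obtain ⟨N, hN⟩ := Nat.exists_mem_closure_of_ge (S : Set ℕ)
  rw [AddSubmonoid.closure_eq] at hN
  rcases Nat.eq_zero_or_pos k with rfl | hk0
  · rfl
  have h₁ : N * k ∈ S := hN _ (Nat.le_mul_of_pos_right N hk0) (hk.mul_left N)
  have h₂ : (N + 1) * k ∈ S := hN _ (by nlinarith) (hk.mul_left _)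
  -- `N * k + (w + k) = (N + 1) * k + w` are two decompositions of the same element of `T`
  obtain ⟨p, -, huniq⟩ := hflat (N * k + (w + k)) (add_mem (hST h₁) hw'.1)
  have := (huniq (N * k, w + k) ⟨h₁, hw', rfl⟩).trans
    (huniq ((N + 1) * k, w) ⟨h₂, hw, by ring⟩).symm
  simpa using (congrArg Prod.snd this).symm

theorem mem_iff (hflat : IsFlat S T) (hST : S ≤ T) {t : ℕ} :
    t ∈ S ↔ t ∈ T ∧ Nat.setGcd S ∣ t := by
  refine ⟨fun ht => ⟨hST ht, Nat.setGcd_dvd_of_mem ht⟩, fun ⟨ht, hdt⟩ => ?_⟩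
  obtain ⟨⟨s, w⟩, ⟨hs, hw, rfl⟩, -⟩ := hflat t ht
  have hdw : w ≡ 0 [MOD Nat.setGcd S] :=
    Nat.modEq_zero_iff_dvd.2 ((Nat.dvd_add_right (Nat.setGcd_dvd_of_mem hs)).1 hdt)
  rw [hflat.apery_eq_of_modEq hST hw (zero_mem_apery (zero_mem T)) hdw, add_zero]
  exact hs

end IsFlat

theorem exists_lt_mul_modEq {a n : ℕ} (hn : 0 < n) (ha : Nat.Coprime a n) (b : ℕ) :
    ∃ i < n, i * a ≡ b [MOD n] := by
  have : NeZero n := ⟨hn.ne'⟩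
  refine ⟨((b : ZMod n) * (a : ZMod n)⁻¹).val, ZMod.val_lt _, ?_⟩
  rw [← ZMod.natCast_eq_natCast_iff]
  push_cast
  rw [ZMod.natCast_zmod_val, mul_assoc, mul_comm _ (a : ZMod n), ZMod.coe_mul_inv_eq_one a ha,
    mul_one]

theorem exists_pos_mul_modEq {e a b : ℕ} (he : 1 < e) (ha : Nat.Coprime a e)
    (hb : Nat.Coprime b e) :
    ∃ i, 0 < i ∧ i < e ∧ i * a ≡ b [MOD e] := by
  obtain ⟨i, hie, hi⟩ := exists_lt_mul_modEq (by omega) ha b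
  refine ⟨i, Nat.pos_of_ne_zero ?_, hie, hi⟩
  rintro rfl
  have := hb.symm.eq_one_of_dvd ((Nat.modEq_zero_iff_dvd).1 (by simpa using hi.symm))
  omega

theorem mul_lt_of_dvd_mul_of_coprime {a b e σ i γ : ℕ} (ha : 0 < a) (hb : 0 < b)
    (hcop : Nat.Coprime (a * e) σ) (hi : i < e) (hγ : 0 < γ) (h : a * b * e ∣ γ * (b * σ)) :
    a * i < γ := by
  have hdvd : a * e ∣ γ := hcop.dvd_of_dvd_mul_right <| Nat.dvd_of_mul_dvd_mul_left hb <| by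
    convert h using 1 <;> ring
  exact (Nat.mul_lt_mul_of_pos_left hi ha).trans_le (Nat.le_of_dvd hγ hdvd)

section TwoGenerators

variable {s₁ s₂ : ℕ}

theorem mem_closure_pair_iff {x : ℕ} :
    x ∈ AddSubmonoid.closure ({s₁, s₂} : Set ℕ) ↔ ∃ m n : ℕ, m * s₁ + n * s₂ = x := by
  simp only [AddSubmonoid.mem_closure_pair, smul_eq_mul]

theorem mem_closure_mul_pair_iff (hcop : Nat.Coprime s₁ s₂) {a₁ a₂ x : ℕ} (h₁ : a₁ ∣ s₂)
    (h₂ : a₂ ∣ s₁) :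
    x ∈ AddSubmonoid.closure ({a₁ * s₁, a₂ * s₂} : Set ℕ) ↔
      x ∈ AddSubmonoid.closure ({s₁, s₂} : Set ℕ) ∧ a₁ * a₂ ∣ x := by
  simp only [mem_closure_pair_iff]
  constructor
  · rintro ⟨m, n, rfl⟩
    refine ⟨⟨m * a₁, n * a₂, by ring⟩, dvd_add ?_ ?_⟩
    · exact (mul_dvd_mul_left a₁ h₂).mul_left m
    · exact (mul_comm a₂ a₁ ▸ mul_dvd_mul_left a₂ h₁).mul_left n
  · rintro ⟨⟨m, n, rfl⟩, hx⟩
    obtain ⟨m', rfl⟩ : a₁ ∣ m :=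
      (Nat.Coprime.coprime_dvd_left h₁ hcop.symm).dvd_of_dvd_mul_right
        ((Nat.dvd_add_left (h₁.mul_left n)).1 (dvd_of_mul_right_dvd hx))
    obtain ⟨n', rfl⟩ : a₂ ∣ n :=
      (Nat.Coprime.coprime_dvd_left h₂ hcop).dvd_of_dvd_mul_right
        ((Nat.dvd_add_right (h₂.mul_left _)).1 (dvd_of_mul_left_dvd hx))
    exact ⟨m', n', by ring⟩

theorem eq_zero_of_mul_eq_add_mul (hcop : Nat.Coprime s₁ s₂) {i a b : ℕ} (hi : i < s₂)
    (h : i * s₁ = a * s₁ + b * s₂) : b = 0 := by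
  obtain ⟨c, rfl⟩ : s₁ ∣ b := hcop.dvd_of_dvd_mul_right
    ((Nat.dvd_add_right (dvd_mul_left s₁ a)).1 (h ▸ dvd_mul_left s₁ i))
  rcases Nat.eq_zero_or_pos c with rfl | hc
  · rfl
  rcases Nat.eq_zero_or_pos s₁ with rfl | hs₁
  · simp
  nlinarith [Nat.mul_le_mul_right s₂ (Nat.le_mul_of_pos_right s₁ hc)]

theorem mul_mem_apery {S : AddSubmonoid ℕ} (hS : S ≤ AddSubmonoid.closure {s₁, s₂})
    (hcop : Nat.Coprime s₁ s₂) {i : ℕ} (hi : i < s₂) (hS₁ : ∀ γ, 0 < γ → γ * s₁ ∈ S → i < γ) :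
    i * s₁ ∈ apery (AddSubmonoid.closure ({s₁, s₂} : Set ℕ) : Set ℕ) S := by
  refine ⟨mem_closure_pair_iff.2 ⟨i, 0, by ring⟩, fun s hs hs0 w hw heq => ?_⟩
  obtain ⟨γ₁, γ₂, rfl⟩ := mem_closure_pair_iff.1 (hS hs)
  obtain ⟨c₁, c₂, rfl⟩ := mem_closure_pair_iff.1 hw
  obtain ⟨rfl, rfl⟩ : γ₂ = 0 ∧ c₂ = 0 := by
    have := eq_zero_of_mul_eq_add_mul (a := γ₁ + c₁) (b := γ₂ + c₂) hcop hi
      (by rw [heq]; ring)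
    omega
  simp only [zero_mul, add_zero] at hs hs0 heq
  have hγ := hS₁ γ₁ (Nat.pos_of_ne_zero (left_ne_zero_of_mul hs0)) hs
  nlinarith [Nat.mul_lt_mul_of_pos_right hγ (Nat.pos_of_ne_zero (right_ne_zero_of_mul hs0))]

theorem one_lt_of_notMem_closure_pair (hcop : Nat.Coprime s₁ s₂) {n : ℕ}
    (hn : n ∉ AddSubmonoid.closure ({s₁, s₂} : Set ℕ)) : 1 < s₁ := by
  by_contra! h
  interval_cases s₁
  · exact hn (mem_closure_pair_iff.2 ⟨0, n, by simp [(Nat.coprime_zero_left _).1 hcop]⟩)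
  · exact hn (mem_closure_pair_iff.2 ⟨n, 0, by simp⟩)

theorem exists_mul_eq_add_mul_of_notMem (hcop : Nat.Coprime s₁ s₂) {n : ℕ}
    (hn : n ∉ AddSubmonoid.closure ({s₁, s₂} : Set ℕ)) :
    ∃ i j, 0 < i ∧ i < s₂ ∧ j < s₁ ∧ i * s₁ = n + j * s₂ := by
  have hs₂ := one_lt_of_notMem_closure_pair hcop.symm (by rwa [Set.pair_comm])
  obtain ⟨i, his₂, hi⟩ := exists_lt_mul_modEq (by omega) hcop n
  by_cases hle : i * s₁ ≤ n
  · obtain ⟨k, hk⟩ := (Nat.modEq_iff_dvd' hle).1 hi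
    exact absurd (mem_closure_pair_iff.2 ⟨i, k, by rw [mul_comm k]; omega⟩) hn
  obtain ⟨j, hj⟩ := (Nat.modEq_iff_dvd' (not_le.1 hle).le).1 hi.symm
  have hi0 : i ≠ 0 := by rintro rfl; simp at hle
  have hs₁ : s₁ ≠ 0 := by rintro rfl; simp at hle
  have : i * s₁ < s₂ * s₁ := Nat.mul_lt_mul_of_pos_right his₂ (Nat.pos_of_ne_zero hs₁)
  exact ⟨i, j, Nat.pos_of_ne_zero hi0, his₂,
    Nat.lt_of_mul_lt_mul_left (a := s₂) (by omega), by rw [mul_comm j]; omega⟩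

theorem exists_mul_modEq_mul_of_notMem {e : ℕ} (he : 1 < e) (h₁ : Nat.Coprime s₁ e)
    (h₂ : Nat.Coprime s₂ e) (hcop : Nat.Coprime s₁ s₂)
    (heT : e ∉ AddSubmonoid.closure ({s₁, s₂} : Set ℕ)) :
    ∃ i j, 0 < i ∧ i < s₂ ∧ i < e ∧ j < s₁ ∧ j < e ∧ i * s₁ ≡ j * s₂ [MOD e] := by
  have hs₁ := one_lt_of_notMem_closure_pair hcop heT
  have hs₂ := one_lt_of_notMem_closure_pair hcop.symm (by rwa [Set.pair_comm])
  by_cases hes₂ : e ≤ s₂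
  · obtain ⟨i, hi0, hie, hi⟩ := exists_pos_mul_modEq he h₁ h₂
    exact ⟨i, 1, hi0, by omega, hie, hs₁, he, by simpa using hi⟩
  by_cases hes₁ : e ≤ s₁
  · obtain ⟨j, -, hje, hj⟩ := exists_pos_mul_modEq he h₂ h₁
    exact ⟨1, j, one_pos, hs₂, he, by omega, hje, by simpa using hj.symm⟩
  obtain ⟨i, j, hi0, his₂, hjs₁, hij⟩ := exists_mul_eq_add_mul_of_notMem hcop heT
  exact ⟨i, j, hi0, his₂, by omega, hjs₁, by omega, hij ▸ Nat.add_modEq_left⟩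

theorem exists_mul_modEq_mul_of_gcd_mul_gcd_ne (hcop : Nat.Coprime s₁ s₂) {d : ℕ}
    (hd : d ∉ AddSubmonoid.closure ({s₁, s₂} : Set ℕ)) (hne : Nat.gcd d s₂ * Nat.gcd d s₁ ≠ d) :
    ∃ i j, 0 < i ∧ i < s₂ ∧ j < s₁ ∧ (∀ γ, 0 < γ → d ∣ γ * s₁ → i < γ) ∧
      (∀ γ, 0 < γ → d ∣ γ * s₂ → j < γ) ∧ i * s₁ ≡ j * s₂ [MOD d] := by
  have hd0 : 0 < d := Nat.pos_of_ne_zero fun h => hd (h ▸ zero_mem _)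
  set a₁ := Nat.gcd d s₂
  set a₂ := Nat.gcd d s₁
  have ha₁ : 0 < a₁ := Nat.gcd_pos_of_pos_left _ hd0
  have ha₂ : 0 < a₂ := Nat.gcd_pos_of_pos_left _ hd0
  obtain ⟨σ₁, hσ₁⟩ : a₂ ∣ s₁ := Nat.gcd_dvd_right d s₁
  obtain ⟨σ₂, hσ₂⟩ : a₁ ∣ s₂ := Nat.gcd_dvd_right d s₂
  obtain ⟨e, he⟩ : a₁ * a₂ ∣ d := Nat.Coprime.mul_dvd_of_dvd_of_dvd
    (Nat.Coprime.coprime_dvd_right (Nat.gcd_dvd_right d s₁)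
      (Nat.Coprime.coprime_dvd_left (Nat.gcd_dvd_right d s₂) hcop.symm))
    (Nat.gcd_dvd_left d s₂) (Nat.gcd_dvd_left d s₁)
  -- `a₂ = gcd (a₂ * (a₁ * e)) (a₂ * σ₁) = a₂ * gcd (a₁ * e) σ₁`, and symmetrically for `a₁`
  have hc₁ : Nat.Coprime (a₁ * e) σ₁ := by
    refine (mul_eq_left₀ ha₂.ne').1 ?_
    rw [← Nat.gcd_mul_left, ← hσ₁, show a₂ * (a₁ * e) = d by rw [he]; ring]
  have hc₂ : Nat.Coprime (a₂ * e) σ₂ := by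
    refine (mul_eq_left₀ ha₁.ne').1 ?_
    rw [← Nat.gcd_mul_left, ← hσ₂, show a₁ * (a₂ * e) = d by rw [he]; ring]
  have he1 : 1 < e := by
    have : e ≠ 0 := by rintro rfl; omega
    have : e ≠ 1 := by rintro rfl; exact hne (by rw [he, mul_one])
    omega
  have heT : e ∉ AddSubmonoid.closure ({σ₁, σ₂} : Set ℕ) := fun h => by
    obtain ⟨x, y, hxy⟩ := mem_closure_pair_iff.1 h
    exact hd (mem_closure_pair_iff.2 ⟨x * a₁, y * a₂, by rw [he, hσ₁, hσ₂, ← hxy]; ring⟩)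
  have hσ : Nat.Coprime σ₁ σ₂ := (hσ₂ ▸ hσ₁ ▸ hcop).coprime_mul_left.coprime_mul_left_right
  obtain ⟨i, j, hi0, hiσ, hie, hjσ, hje, hij⟩ := exists_mul_modEq_mul_of_notMem he1
    hc₁.coprime_mul_left.symm hc₂.coprime_mul_left.symm hσ heT
  refine ⟨a₁ * i, a₂ * j, Nat.mul_pos ha₁ hi0, hσ₂ ▸ Nat.mul_lt_mul_of_pos_left hiσ ha₁,
    hσ₁ ▸ Nat.mul_lt_mul_of_pos_left hjσ ha₂,
    fun γ hγ h => mul_lt_of_dvd_mul_of_coprime ha₁ ha₂ hc₁ hie hγ (by rwa [he, hσ₁] at h),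
    fun γ hγ h => mul_lt_of_dvd_mul_of_coprime ha₂ ha₁ hc₂ hje hγ
      (by rwa [he, hσ₂, mul_comm a₁ a₂] at h), ?_⟩
  rw [he, hσ₁, hσ₂]
  convert hij.mul_left' (a₁ * a₂) using 1 <;> ring

theorem IsFlat.gcd_mul_gcd_eq_setGcd {S : AddSubmonoid ℕ} (hcop : Nat.Coprime s₁ s₂)
    (hS : S ≤ AddSubmonoid.closure {s₁, s₂}) (hflat : IsFlat S (AddSubmonoid.closure {s₁, s₂}))
    (hd : Nat.setGcd S ∉ AddSubmonoid.closure ({s₁, s₂} : Set ℕ)) :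
    Nat.gcd (Nat.setGcd S) s₂ * Nat.gcd (Nat.setGcd S) s₁ = Nat.setGcd S := by
  by_contra hne
  obtain ⟨i, j, hi0, his₂, hjs₁, hi, hj, hij⟩ :=
    exists_mul_modEq_mul_of_gcd_mul_gcd_ne hcop hd hne
  have hx := mul_mem_apery hS hcop his₂ fun γ hγ hγS => hi γ hγ (Nat.setGcd_dvd_of_mem hγS)
  have hy := mul_mem_apery (s₁ := s₂) (s₂ := s₁) (Set.pair_comm s₁ s₂ ▸ hS) hcop.symm hjs₁
    fun γ hγ hγS => hj γ hγ (Nat.setGcd_dvd_of_mem hγS)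
  rw [Set.pair_comm] at hy
  have hs₂i : s₂ ∣ i := hcop.symm.dvd_of_dvd_mul_right
    ⟨j, by rw [hflat.apery_eq_of_modEq hS hx hy hij, mul_comm]⟩
  exact (Nat.le_of_dvd hi0 hs₂i).not_gt his₂

end TwoGenerators

theorem flat_two_generators_classification_general (s₁ s₂ : ℕ)
    (hcop : Nat.Coprime s₁ s₂)
    (S : AddSubmonoid ℕ) (hsub : S ≤ AddSubmonoid.closure ({s₁, s₂} : Set ℕ))
    (hflat : ∀ x ∈ AddSubmonoid.closure ({s₁, s₂} : Set ℕ), ∃! p : ℕ × ℕ,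
      p.1 ∈ S ∧
      p.2 ∈ apery (AddSubmonoid.closure ({s₁, s₂} : Set ℕ) : Set ℕ) (S : Set ℕ) ∧
      x = p.1 + p.2) :
    (∃ g : ℕ, S = AddSubmonoid.closure ({g} : Set ℕ)) ∨
    (∃ a₁ a₂ : ℕ, 0 < a₁ ∧ 0 < a₂ ∧ a₁ ∣ s₂ ∧ a₂ ∣ s₁ ∧
      S = AddSubmonoid.closure ({a₁ * s₁, a₂ * s₂} : Set ℕ)) := by
  have hmem : ∀ t, t ∈ S ↔ t ∈ AddSubmonoid.closure ({s₁, s₂} : Set ℕ) ∧ Nat.setGcd S ∣ t :=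
    fun t => IsFlat.mem_iff hflat hsub
  by_cases hdT : Nat.setGcd S ∈ AddSubmonoid.closure ({s₁, s₂} : Set ℕ)
  · refine Or.inl ⟨Nat.setGcd S, AddSubmonoid.ext fun t => ?_⟩
    rw [hmem, AddSubmonoid.mem_closure_singleton]
    constructor
    · rintro ⟨-, k, rfl⟩
      exact ⟨k, by rw [smul_eq_mul, mul_comm]⟩
    · rintro ⟨k, rfl⟩
      exact ⟨AddSubmonoid.nsmul_mem _ hdT k, Dvd.intro_left k (smul_eq_mul k _).symm⟩
  have hd0 : 0 < Nat.setGcd S := Nat.pos_of_ne_zero fun h => hdT (h ▸ zero_mem _)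
  refine Or.inr ⟨_, _, Nat.gcd_pos_of_pos_left s₂ hd0, Nat.gcd_pos_of_pos_left s₁ hd0,
    Nat.gcd_dvd_right _ _, Nat.gcd_dvd_right _ _, AddSubmonoid.ext fun t => ?_⟩
  rw [mem_closure_mul_pair_iff hcop (Nat.gcd_dvd_right _ _) (Nat.gcd_dvd_right _ _),
    IsFlat.gcd_mul_gcd_eq_setGcd hcop hsub hflat hdT, hmem]

/-- if `S ⊆ ⟨s₁,s₂⟩` (with `s₁, s₂` coprime) gives a flat algebra, then `S`
is principal or generated by `a₁s₁, a₂s₂` with `a₁ ∣ s₂` and `a₂ ∣ s₁`. -/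
theorem flat_two_generators_classification (s₁ s₂ : ℕ)
    (hs₁ : 0 < s₁) (hs₂ : 0 < s₂) (hcop : Nat.Coprime s₁ s₂)
    (S : AddSubmonoid ℕ) (hsub : S ≤ AddSubmonoid.closure ({s₁, s₂} : Set ℕ))
    (hflat : ∀ x ∈ AddSubmonoid.closure ({s₁, s₂} : Set ℕ), ∃! p : ℕ × ℕ,
      p.1 ∈ S ∧
      p.2 ∈ apery (AddSubmonoid.closure ({s₁, s₂} : Set ℕ) : Set ℕ) (S : Set ℕ) ∧
      x = p.1 + p.2) :
    (∃ g : ℕ, S = AddSubmonoid.closure ({g} : Set ℕ)) ∨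
    (∃ a₁ a₂ : ℕ, 0 < a₁ ∧ 0 < a₂ ∧ a₁ ∣ s₂ ∧ a₂ ∣ s₁ ∧
      S = AddSubmonoid.closure ({a₁ * s₁, a₂ * s₂} : Set ℕ)) :=
  flat_two_generators_classification_general s₁ s₂ hcop S hsub hflat
end

section
/- Let B be an n×n real matrix with diagonal entries β₁, ..., βₙ and off-diagonal entries -β_{ij} (i ≠ j), where β_j > β_{ij} ≥ 0 for all i, j. Suppose there exist positive real numbers s₁, ..., sₙ such that β_i s_i ≥ Σ_{j≠i} β_{ij} s_j for all i. Then det B ≥ 0 and every entry of the adjugate matrix of B is non-negative. -/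
private def Mmat (n : ℕ) (β : Fin n → ℝ) (βo : Fin n → Fin n → ℝ) : Matrix (Fin n) (Fin n) ℝ :=
  Matrix.of fun i j => if i = j then β i else -(βo i j)

private lemma key_lemma (n : ℕ) (β : Fin n → ℝ) (βo : Fin n → Fin n → ℝ)
    (hβo : ∀ i j, i ≠ j → 0 ≤ βo i j)
    (s : Fin n → ℝ) (hs : ∀ i, 0 < s i)
    (hstrict : ∀ i, ∑ j ∈ Finset.univ.erase i, βo i j * s j < β i * s i)
    (x : Fin n → ℝ) (hx : ∀ i, 0 ≤ (Mmat n β βo).mulVec x i) :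
    ∀ i, 0 ≤ x i := by
  by_contra h
  push_neg at h
  obtain ⟨i₁, hi₁⟩ := h
  obtain ⟨i₀, -, hmin⟩ := Finset.exists_min_image Finset.univ (fun i => x i / s i)
    ⟨i₁, Finset.mem_univ i₁⟩
  set m := x i₀ / s i₀ with hm
  have hm_neg : m < 0 :=
    lt_of_le_of_lt (hmin i₁ (Finset.mem_univ i₁)) (div_neg_of_neg_of_pos hi₁ (hs i₁))
  have hxj : ∀ j, m * s j ≤ x j := by
    intro j
    calc m * s j ≤ (x j / s j) * s j :=
          mul_le_mul_of_nonneg_right (hmin j (Finset.mem_univ j)) (hs j).le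
      _ = x j := div_mul_cancel₀ _ (hs j).ne'
  have hxi0 : x i₀ = m * s i₀ := by
    rw [hm, div_mul_cancel₀ _ (hs i₀).ne']
  have hmv : (Mmat n β βo).mulVec x i₀ =
      β i₀ * x i₀ - ∑ j ∈ Finset.univ.erase i₀, βo i₀ j * x j := by
    calc (Mmat n β βo).mulVec x i₀ = ∑ j, Mmat n β βo i₀ j * x j := rfl
      _ = Mmat n β βo i₀ i₀ * x i₀ +
          ∑ j ∈ Finset.univ.erase i₀, Mmat n β βo i₀ j * x j :=
        (Finset.add_sum_erase _ _ (Finset.mem_univ i₀)).symm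
      _ = β i₀ * x i₀ - ∑ j ∈ Finset.univ.erase i₀, βo i₀ j * x j := by
        rw [show Mmat n β βo i₀ i₀ = β i₀ by simp [Mmat], sub_eq_add_neg, ← Finset.sum_neg_distrib]
        congr 1
        refine Finset.sum_congr rfl fun j hj => ?_
        have hij : i₀ ≠ j := (Finset.ne_of_mem_erase hj).symm
        simp [Mmat, if_neg hij]
  have hlt : (Mmat n β βo).mulVec x i₀ < 0 := by
    rw [hmv]
    have h1 : m * ∑ j ∈ Finset.univ.erase i₀, βo i₀ j * s j ≤
        ∑ j ∈ Finset.univ.erase i₀, βo i₀ j * x j := by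
      rw [Finset.mul_sum]
      refine Finset.sum_le_sum fun j hj => ?_
      have hij : i₀ ≠ j := (Finset.ne_of_mem_erase hj).symm
      calc m * (βo i₀ j * s j) = βo i₀ j * (m * s j) := by ring
        _ ≤ βo i₀ j * x j := mul_le_mul_of_nonneg_left (hxj j) (hβo i₀ j hij)
    have h2 : m * (β i₀ * s i₀) < m * ∑ j ∈ Finset.univ.erase i₀, βo i₀ j * s j :=
      mul_lt_mul_of_neg_left (hstrict i₀) hm_neg
    have : β i₀ * x i₀ < ∑ j ∈ Finset.univ.erase i₀, βo i₀ j * x j := by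
      rw [hxi0]
      calc β i₀ * (m * s i₀) = m * (β i₀ * s i₀) := by ring
        _ < m * ∑ j ∈ Finset.univ.erase i₀, βo i₀ j * s j := h2
        _ ≤ _ := h1
    linarith
  exact absurd (hx i₀) (not_le.mpr hlt)

private lemma det_ne_zero (n : ℕ) (β : Fin n → ℝ) (βo : Fin n → Fin n → ℝ)
    (hβo : ∀ i j, i ≠ j → 0 ≤ βo i j)
    (s : Fin n → ℝ) (hs : ∀ i, 0 < s i)
    (hstrict : ∀ i, ∑ j ∈ Finset.univ.erase i, βo i j * s j < β i * s i) :
    (Mmat n β βo).det ≠ 0 := by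
  intro h
  obtain ⟨v, hv0, hv⟩ := Matrix.exists_mulVec_eq_zero_iff.mpr h
  apply hv0
  funext i
  have h1 := key_lemma n β βo hβo s hs hstrict v (fun k => by rw [hv]; exact le_refl 0) i
  have h2 := key_lemma n β βo hβo s hs hstrict (-v)
    (fun k => by rw [Matrix.mulVec_neg, hv]; simp) i
  have : v i ≤ 0 := by simpa using h2
  exact le_antisymm this h1

private lemma inv_nonneg_strict (n : ℕ) (β : Fin n → ℝ) (βo : Fin n → Fin n → ℝ)
    (hβo : ∀ i j, i ≠ j → 0 ≤ βo i j)
    (s : Fin n → ℝ) (hs : ∀ i, 0 < s i)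
    (hstrict : ∀ i, ∑ j ∈ Finset.univ.erase i, βo i j * s j < β i * s i) :
    ∀ i j, 0 ≤ (Mmat n β βo)⁻¹ i j := by
  intro i j
  have hdet := det_ne_zero n β βo hβo s hs hstrict
  have hinv : (Mmat n β βo) * (Mmat n β βo)⁻¹ = 1 :=
    Matrix.mul_nonsing_inv _ (isUnit_iff_ne_zero.mpr hdet)
  set x : Fin n → ℝ := (Mmat n β βo)⁻¹.mulVec (Pi.single j 1) with hxdef
  have hmx : (Mmat n β βo).mulVec x = Pi.single j 1 := by
    rw [hxdef, Matrix.mulVec_mulVec, hinv, Matrix.one_mulVec]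
  have hx : ∀ k, 0 ≤ (Mmat n β βo).mulVec x k := by
    intro k
    rw [hmx]
    by_cases hk : k = j <;> simp [hk, Pi.single_apply]
  have := key_lemma n β βo hβo s hs hstrict x hx i
  simpa [hxdef, Matrix.mulVec_single] using this

private lemma det_pos_aux (n : ℕ) (β : Fin n → ℝ) (βo : Fin n → Fin n → ℝ)
    (hβo : ∀ i j, i ≠ j → 0 ≤ βo i j)
    (s : Fin n → ℝ) (hs : ∀ i, 0 < s i)
    (hineq : ∀ i, ∑ j ∈ Finset.univ.erase i, βo i j * s j ≤ β i * s i)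
    (v : ℝ) (hv : 0 ≤ v) :
    0 < (Mmat n (fun i => v * β i + 1) (fun i j => v * βo i j)).det := by
  set g : ℝ → ℝ := fun t => (Mmat n (fun i => t * β i + 1) (fun i j => t * βo i j)).det with hg
  have hgcont : Continuous g := by
    apply Continuous.matrix_det
    apply continuous_matrix
    intro i j
    simp only [Mmat, Matrix.of_apply]
    split_ifs <;> fun_prop
  have hgne : ∀ t : ℝ, 0 ≤ t → g t ≠ 0 := by
    intro t ht
    apply det_ne_zero n _ _ (fun i j hij => mul_nonneg ht (hβo i j hij)) s hs
    intro i
    have h1 : ∑ j ∈ Finset.univ.erase i, t * βo i j * s j ≤ t * (β i * s i) := by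
      calc ∑ j ∈ Finset.univ.erase i, t * βo i j * s j
          = t * ∑ j ∈ Finset.univ.erase i, βo i j * s j := by
            rw [Finset.mul_sum]; exact Finset.sum_congr rfl fun j _ => by ring
        _ ≤ t * (β i * s i) := mul_le_mul_of_nonneg_left (hineq i) ht
    have h2 : t * (β i * s i) < (t * β i + 1) * s i := by nlinarith [hs i]
    linarith
  have hg0 : g 0 = 1 := by
    have : Mmat n (fun i => (0:ℝ) * β i + 1) (fun i j => (0:ℝ) * βo i j) = 1 := by
      ext i j
      by_cases h : i = j <;> simp [Mmat, Matrix.one_apply, h]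
    rw [hg]; simp only [this, Matrix.det_one]
  by_contra hle
  push_neg at hle
  have hvne : g v ≠ 0 := hgne v hv
  have hvlt : g v < 0 := lt_of_le_of_ne hle hvne
  have hv0 : (0:ℝ) < v := by
    rcases lt_or_eq_of_le hv with h | h
    · exact h
    · exfalso; rw [← h, hg0] at hvlt; linarith
  have := intermediate_value_Icc' hv0.le hgcont.continuousOn
  have hmem : (0:ℝ) ∈ Set.Icc (g v) (g 0) := ⟨hvlt.le, by rw [hg0]; norm_num⟩
  obtain ⟨c, hc, hgc⟩ := this hmem
  exact hgne c hc.1 hgc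

private lemma det_pos_shift (n : ℕ) (β : Fin n → ℝ) (βo : Fin n → Fin n → ℝ)
    (hβo : ∀ i j, i ≠ j → 0 ≤ βo i j)
    (s : Fin n → ℝ) (hs : ∀ i, 0 < s i)
    (hineq : ∀ i, ∑ j ∈ Finset.univ.erase i, βo i j * s j ≤ β i * s i)
    (u : ℝ) (hu : 0 < u) :
    0 < (Mmat n (fun i => β i + u) βo).det := by
  have heq : Mmat n (fun i => β i + u) βo =
      u • Mmat n (fun i => (1/u) * β i + 1) (fun i j => (1/u) * βo i j) := by
    ext i j
    simp only [Mmat, Matrix.smul_apply, Matrix.of_apply, smul_eq_mul]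
    split_ifs <;> field_simp <;> ring
  rw [heq, Matrix.det_smul, Fintype.card_fin]
  exact mul_pos (pow_pos hu n)
    (det_pos_aux n β βo hβo s hs hineq (1/u) (by positivity))

/-- Lemma 4.5: for a matrix with diagonal `βᵢ` and off-diagonal `-βᵢⱼ`,
`0 ≤ βᵢⱼ < βⱼ`, admitting positive weights `s` with `βᵢsᵢ ≥ Σ_{j≠i} βᵢⱼsⱼ`, the
determinant and all adjugate entries are non-negative. -/
theorem det_and_adjugate_nonneg (n : ℕ) (β : Fin n → ℝ) (βo : Fin n → Fin n → ℝ)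
    (hβo : ∀ i j, i ≠ j → 0 ≤ βo i j ∧ βo i j < β j)
    (s : Fin n → ℝ) (hs : ∀ i, 0 < s i)
    (hineq : ∀ i, ∑ j ∈ Finset.univ.erase i, βo i j * s j ≤ β i * s i) :
    0 ≤ (Matrix.of fun i j => if i = j then β i else -(βo i j)).det ∧
      ∀ i j, 0 ≤ (Matrix.of fun i j => if i = j then β i else -(βo i j)).adjugate i j := by
  have hβo' : ∀ i j, i ≠ j → 0 ≤ βo i j := fun i j hij => (hβo i j hij).1
  -- strict dominance for the shifted matrices
  have hstrict : ∀ u : ℝ, 0 < u → ∀ i,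
      ∑ j ∈ Finset.univ.erase i, βo i j * s j < (β i + u) * s i := by
    intro u hu i
    have := hineq i
    nlinarith [hs i]
  -- the shifted matrix family
  set M : ℝ → Matrix (Fin n) (Fin n) ℝ := fun u => Mmat n (fun i => β i + u) βo with hM
  have hMcont : Continuous M := by
    apply continuous_matrix
    intro i j
    simp only [hM, Mmat, Matrix.of_apply]
    split_ifs <;> fun_prop
  have hM0 : M 0 = Mmat n β βo := by
    rw [hM]; simp
  have hdetpos : ∀ u : ℝ, 0 < u → 0 < (M u).det := fun u hu =>
    det_pos_shift n β βo hβo' s hs hineq u hu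
  have hinvpos : ∀ u : ℝ, 0 < u → ∀ i j, 0 ≤ (M u)⁻¹ i j := fun u hu =>
    inv_nonneg_strict n _ βo hβo' s hs (hstrict u hu)
  have hadjpos : ∀ u : ℝ, 0 < u → ∀ i j, 0 ≤ (M u).adjugate i j := by
    intro u hu i j
    have hdet := (hdetpos u hu).ne'
    have : (M u)⁻¹ = ((M u).det)⁻¹ • (M u).adjugate := by
      rw [Matrix.inv_def, Ring.inverse_eq_inv]
    have hentry : (M u).adjugate i j = (M u).det * (M u)⁻¹ i j := by
      rw [this, Matrix.smul_apply, smul_eq_mul, ← mul_assoc, mul_inv_cancel₀ hdet, one_mul]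
    rw [hentry]
    exact mul_nonneg (hdetpos u hu).le (hinvpos u hu i j)
  constructor
  · have hFcont : Continuous fun u => (M u).det := hMcont.matrix_det
    have ht : Filter.Tendsto (fun u => (M u).det) (nhdsWithin 0 (Set.Ioi 0))
        (nhds ((M 0).det)) := (hFcont.tendsto 0).mono_left nhdsWithin_le_nhds
    have h0 : 0 ≤ (M 0).det :=
      ge_of_tendsto ht (Filter.eventually_of_mem self_mem_nhdsWithin
        fun u hu => (hdetpos u hu).le)
    rw [hM0] at h0
    exact h0
  · intro i j
    have hadjcont : Continuous fun u => (M u).adjugate i j :=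
      (continuous_apply j).comp ((continuous_apply i).comp hMcont.matrix_adjugate)
    have ht : Filter.Tendsto (fun u => (M u).adjugate i j) (nhdsWithin 0 (Set.Ioi 0))
        (nhds ((M 0).adjugate i j)) := (hadjcont.tendsto 0).mono_left nhdsWithin_le_nhds
    have h0 : 0 ≤ (M 0).adjugate i j :=
      ge_of_tendsto ht (Filter.eventually_of_mem self_mem_nhdsWithin
        fun u hu => hadjpos u hu i j)
    rw [hM0] at h0
    exact h0
end

section
/- Let a and b be positive integers such that gcd(a, b, 4) = 1, and suppose a and b are minimal generators of S' = ⟨4, a, b⟩ not in ⟨4⟩ ∪ (the semigroup generated by 4 and the other), with a < b. If the Apéry set of S' with respect to ⟨4⟩ equals the rectangle {r₁a + r₂b : 0 ≤ r₁, r₂ ≤ 1} = {0, a, b, a+b}, then a or b is even. -/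
/-- if `⟨4,a,b⟩/⟨4⟩` is rectangular with Apéry set `{0, a, b, a+b}`,
then `a` or `b` is even. -/
theorem rectangular_four_gen_even (a b : ℕ) (hapos : 0 < a) (hbpos : 0 < b) (hab : a < b)
    (hgcd : Nat.gcd (Nat.gcd a b) 4 = 1)
    (hamin : a ∉ AddSubmonoid.closure ({4, b} : Set ℕ))
    (hbmin : b ∉ AddSubmonoid.closure ({4, a} : Set ℕ))
    (hrect : apery (AddSubmonoid.closure ({4, a, b} : Set ℕ) : Set ℕ)
        (AddSubmonoid.closure ({4} : Set ℕ) : Set ℕ) = {0, a, b, a + b}) :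
    Even a ∨ Even b := by
  by_contra h
  push_neg at h
  obtain ⟨ha, hb⟩ := h
  rw [Nat.not_even_iff_odd] at ha hb
  have hmem : a + b ∈ apery (AddSubmonoid.closure ({4, a, b} : Set ℕ) : Set ℕ)
      (AddSubmonoid.closure ({4} : Set ℕ) : Set ℕ) := by
    rw [hrect]; right; right; right; rfl
  obtain ⟨_, hap⟩ := hmem
  have haS : a ∈ AddSubmonoid.closure ({4, a, b} : Set ℕ) :=
    AddSubmonoid.subset_closure (by right; left; rfl)
  have hdvd : 4 ∣ a + b ∨ 4 ∣ b - a := by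
    obtain ⟨m, hm⟩ := ha; obtain ⟨n, hn⟩ := hb; omega
  rcases hdvd with ⟨k, hk⟩ | ⟨k, hk⟩
  · have hs : a + b ∈ AddSubmonoid.closure ({4} : Set ℕ) :=
      AddSubmonoid.mem_closure_singleton.mpr ⟨k, by simp [smul_eq_mul]; omega⟩
    exact hap (a + b) hs (by omega) 0 (zero_mem _) (by omega)
  · have hs : b - a ∈ AddSubmonoid.closure ({4} : Set ℕ) :=
      AddSubmonoid.mem_closure_singleton.mpr ⟨k, by simp [smul_eq_mul]; omega⟩
    exact hap (b - a) hs (by omega) (a + a) (add_mem haS haS) (by omega)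
end

section
/- Let a and b be positive integers with gcd(a, b, 4) = 1, a ∉ ⟨4, b⟩, b ∉ ⟨4, a⟩, and a < b. If both a and b are odd, then a + b is not an Apéry number of ⟨4, a, b⟩ with respect to ⟨4⟩; that is, a + b - 4 ∈ ⟨4, a, b⟩. -/
/-- if `a, b` are both odd (with `gcd(a,b,4) = 1`, `a ∉ ⟨4,b⟩`,
`b ∉ ⟨4,a⟩`, `a < b`), then `a + b` is not Apéry: `a + b - 4 ∈ ⟨4, a, b⟩`. -/
theorem sum_not_apery_of_odd (a b : ℕ) (hapos : 0 < a) (hbpos : 0 < b) (hab : a < b)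
    (hgcd : Nat.gcd (Nat.gcd a b) 4 = 1)
    (hamin : a ∉ AddSubmonoid.closure ({4, b} : Set ℕ))
    (hbmin : b ∉ AddSubmonoid.closure ({4, a} : Set ℕ))
    (haodd : Odd a) (hbodd : Odd b) :
    a + b - 4 ∈ AddSubmonoid.closure ({4, a, b} : Set ℕ) := by
  have h4 : (4 : ℕ) ∈ AddSubmonoid.closure ({4, a, b} : Set ℕ) :=
    AddSubmonoid.subset_closure (by simp)
  have ha : a ∈ AddSubmonoid.closure ({4, a, b} : Set ℕ) :=
    AddSubmonoid.subset_closure (by simp)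
  have key : ∃ x y : ℕ, a + b - 4 = x * a + y * 4 := by
    obtain ⟨i, hi⟩ := haodd
    obtain ⟨j, hj⟩ := hbodd
    rcases Nat.even_or_odd (i + j) with ⟨m, hm⟩ | ⟨m, hm⟩
    · exact ⟨2, (j - i) / 2 - 1, by omega⟩
    · exact ⟨0, m, by omega⟩
  obtain ⟨x, y, h⟩ := key
  rw [h]
  exact AddSubmonoid.add_mem _
    (by simpa [nsmul_eq_mul] using AddSubmonoid.nsmul_mem _ ha x)
    (by simpa [nsmul_eq_mul] using AddSubmonoid.nsmul_mem _ h4 y)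
end

section
/- Let S and T be numerical semigroups in ℕ, and let p, q be coprime positive integers with p ∈ S and q ∈ T. Then the Apéry set of qS + pT with respect to pqℕ equals {qw₁ + pw₂ : w₁ ∈ Ap(S, pℕ), w₂ ∈ Ap(T, qℕ)}. -/
lemma mem_closure_singleton_nat {p x : ℕ} :
    x ∈ (AddSubmonoid.closure ({p} : Set ℕ) : Set ℕ) ↔ ∃ n, x = n * p := by
  rw [SetLike.mem_coe, AddSubmonoid.mem_closure_singleton]
  constructor
  · rintro ⟨n, rfl⟩; exact ⟨n, (nsmul_eq_mul n p).symm⟩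
  · rintro ⟨n, rfl⟩; exact ⟨n, nsmul_eq_mul n p⟩

lemma exists_apery_decomp (S : AddSubmonoid ℕ) (p : ℕ) (s : ℕ) (hs : s ∈ S) :
    ∃ w ∈ apery (S : Set ℕ) (AddSubmonoid.closure ({p} : Set ℕ) : Set ℕ),
      ∃ i, s = w + i * p := by
  induction s using Nat.strong_induction_on with
  | _ s ih =>
    by_cases h : ∀ a ∈ (AddSubmonoid.closure ({p} : Set ℕ) : Set ℕ), a ≠ 0 →
        ∀ w' ∈ (S : Set ℕ), s ≠ a + w'
    · exact ⟨s, ⟨hs, h⟩, 0, by simp⟩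
    · push_neg at h
      obtain ⟨a, ha, ha0, w', hw', heq⟩ := h
      obtain ⟨k, rfl⟩ := mem_closure_singleton_nat.mp ha
      have hkp : 0 < k * p := Nat.pos_of_ne_zero ha0
      have hlt : w' < s := by omega
      obtain ⟨w, hw, i, hi⟩ := ih w' hlt hw'
      exact ⟨w, hw, i + k, by rw [heq, hi]; ring⟩

lemma apery_shift (T : AddSubmonoid ℕ) (q : ℕ) {w t : ℕ}
    (hw : w ∈ apery (T : Set ℕ) (AddSubmonoid.closure ({q} : Set ℕ) : Set ℕ))
    (ht : t ∈ T) (hmod : w % q = t % q) : ∃ j, t = w + j * q := by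
  rcases le_or_gt w t with h | h
  · have hdvd : q ∣ t - w := (Nat.modEq_iff_dvd' h).mp hmod
    obtain ⟨j, hj⟩ := hdvd
    refine ⟨j, ?_⟩
    rw [Nat.mul_comm]; omega
  · exfalso
    have hdvd : q ∣ w - t := (Nat.modEq_iff_dvd' h.le).mp hmod.symm
    obtain ⟨j, hj⟩ := hdvd
    have hne : q * j ≠ 0 := by omega
    exact hw.2 (q * j) (mem_closure_singleton_nat.mpr ⟨j, by ring⟩) hne t ht (by omega)

/-- multiplicativity of Apéry sets under gluing:
`Ap(qS + pT, pqℕ) = {qw₁ + pw₂ : w₁ ∈ Ap(S, pℕ), w₂ ∈ Ap(T, qℕ)}`. -/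
theorem apery_gluing (S T : AddSubmonoid ℕ) (p q : ℕ) (hp : 0 < p) (hq : 0 < q)
    (hpS : p ∈ S) (hqT : q ∈ T) (hcop : Nat.Coprime p q) :
    apery {x | ∃ s ∈ S, ∃ t ∈ T, x = q * s + p * t}
        (AddSubmonoid.closure ({p * q} : Set ℕ) : Set ℕ)
      = {x | ∃ w₁ ∈ apery (S : Set ℕ) (AddSubmonoid.closure ({p} : Set ℕ) : Set ℕ),
          ∃ w₂ ∈ apery (T : Set ℕ) (AddSubmonoid.closure ({q} : Set ℕ) : Set ℕ),
          x = q * w₁ + p * w₂} := by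
  have hpq : 0 < p * q := Nat.mul_pos hp hq
  ext x
  simp only [apery, Set.mem_setOf_eq]
  constructor
  · rintro ⟨⟨s, hs, t, ht, hx⟩, hap⟩
    obtain ⟨w₁, hw₁, i, hsi⟩ := exists_apery_decomp S p s hs
    obtain ⟨w₂, hw₂, j, htj⟩ := exists_apery_decomp T q t ht
    by_cases h0 : i + j = 0
    · have hi : i = 0 := by omega
      have hj : j = 0 := by omega
      subst hi hj
      exact ⟨w₁, hw₁, w₂, hw₂, by rw [hx, hsi, htj]; ring⟩
    · exfalso
      have hne : (i + j) * (p * q) ≠ 0 := by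
        have := Nat.mul_pos (Nat.pos_of_ne_zero h0) hpq; omega
      exact hap ((i + j) * (p * q))
        (mem_closure_singleton_nat.mpr ⟨i + j, rfl⟩) hne
        (q * w₁ + p * w₂) ⟨w₁, hw₁.1, w₂, hw₂.1, rfl⟩
        (by rw [hx, hsi, htj]; ring)
  · rintro ⟨w₁, hw₁, w₂, hw₂, rfl⟩
    refine ⟨⟨w₁, hw₁.1, w₂, hw₂.1, rfl⟩, ?_⟩
    rintro a ha hane w' ⟨s, hs, t, ht, rfl⟩ heq
    obtain ⟨k, rfl⟩ := mem_closure_singleton_nat.mp ha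
    have hk : k ≠ 0 := by
      rintro rfl; simp at hane
    -- congruence mod p
    have key1 : q * w₁ + p * w₂ = q * s + p * (k * q + t) := by rw [heq]; ring
    have hmod1 : q * w₁ % p = q * s % p := by
      calc q * w₁ % p = (q * w₁ + p * w₂) % p := (Nat.add_mul_mod_self_left _ _ _).symm
        _ = (q * s + p * (k * q + t)) % p := by rw [key1]
        _ = q * s % p := Nat.add_mul_mod_self_left _ _ _
    have hmod1' : w₁ % p = s % p :=
      Nat.ModEq.cancel_left_of_coprime (by simpa [Nat.Coprime] using hcop) hmod1
    obtain ⟨i, hsi⟩ := apery_shift S p hw₁ hs hmod1'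
    -- congruence mod q
    have key2 : p * w₂ + q * w₁ = p * t + q * (k * p + s) := by
      rw [show p * w₂ + q * w₁ = q * w₁ + p * w₂ from Nat.add_comm _ _, heq]; ring
    have hmod2 : p * w₂ % q = p * t % q := by
      calc p * w₂ % q = (p * w₂ + q * w₁) % q := (Nat.add_mul_mod_self_left _ _ _).symm
        _ = (p * t + q * (k * p + s)) % q := by rw [key2]
        _ = p * t % q := Nat.add_mul_mod_self_left _ _ _
    have hmod2' : w₂ % q = t % q :=
      Nat.ModEq.cancel_left_of_coprime (by simpa [Nat.Coprime] using hcop.symm) hmod2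
    obtain ⟨j, htj⟩ := apery_shift T q hw₂ ht hmod2'
    have step : k * (p * q) + (q * s + p * t) = (q * w₁ + p * w₂) + (k + i + j) * (p * q) := by
      rw [hsi, htj]; ring
    have : q * w₁ + p * w₂ = (q * w₁ + p * w₂) + (k + i + j) * (p * q) := heq.trans step
    have hz : (k + i + j) * (p * q) = 0 := by omega
    rcases Nat.mul_eq_zero.mp hz with h | h
    · exact hk (by omega)
    · omega
end

section
/- In the numerical semigroup S' = ⟨12, 14, 16, 35⟩ relative to S = ⟨12, 16⟩, the Apéry set Ap(S', S) equals {0, 14, 35, 49}, and every element of S' has a unique representation as s + w with s ∈ S and w ∈ {0, 14, 35, 49}. -/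
open Pointwise

theorem AddSubmonoid.dvd_of_mem_closure {R : Type*} [Semiring R] {G : Set R} {n x : R}
    (hG : ∀ g ∈ G, n ∣ g) (hx : x ∈ closure G) : n ∣ x := by
  induction hx using closure_induction with
  | mem g hg => exact hG g hg
  | zero => exact dvd_zero n
  | add _ _ _ _ hx hy => exact dvd_add hx hy

theorem AddSubmonoid.closure_subset_add {M : Type*} [AddCommMonoid M] {S : AddSubmonoid M}
    {G W : Set M} (h0 : 0 ∈ W) (hG : ∀ g ∈ G, ∀ w ∈ W, g + w ∈ (S : Set M) + W) :
    (closure G : Set M) ⊆ S + W := by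
  intro x hx
  induction hx using closure_induction_left with
  | zero => exact ⟨0, S.zero_mem, 0, h0, add_zero 0⟩
  | add_left g hg y _ ih =>
    obtain ⟨s, hs, w, hw, rfl⟩ := ih
    obtain ⟨s', hs', w', hw', hgw⟩ := hG g hg w hw
    refine ⟨s + s', S.add_mem hs hs', w', hw', ?_⟩
    simp only at hgw ⊢
    rw [add_assoc, hgw, add_left_comm]

theorem Nat.injOn_add_prod_of_dvd {S W : Set ℕ} {n : ℕ} (hS : ∀ s ∈ S, n ∣ s)
    (hW : Set.InjOn (· % n) W) : Set.InjOn (fun p : ℕ × ℕ => p.1 + p.2) (S ×ˢ W) := by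
  rintro ⟨s₁, w₁⟩ ⟨hs₁, hw₁⟩ ⟨s₂, w₂⟩ ⟨hs₂, hw₂⟩ (h : s₁ + w₁ = s₂ + w₂)
  have hmod : w₁ % n = w₂ % n := by
    simpa [Nat.add_mod, Nat.mod_eq_zero_of_dvd (hS _ hs₁), Nat.mod_eq_zero_of_dvd (hS _ hs₂)]
      using congrArg (· % n) h
  obtain rfl : w₁ = w₂ := hW hw₁ hw₂ hmod
  simpa using h

theorem apery_eq_of_injOn_add {S' : Set ℕ} {S : AddSubmonoid ℕ} {W : Set ℕ} (hWS' : W ⊆ S')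
    (hS' : S' ⊆ S + W) (hinj : Set.InjOn (fun p : ℕ × ℕ => p.1 + p.2) ((S : Set ℕ) ×ˢ W)) :
    apery S' S = W := by
  ext w
  constructor
  · rintro ⟨hw, hap⟩
    obtain ⟨s, hs, w₀, hw₀, rfl⟩ := hS' hw
    obtain rfl : s = 0 := by_contra fun hs0 => hap s hs hs0 w₀ (hWS' hw₀) rfl
    simpa using hw₀
  · refine fun hw => ⟨hWS' hw, fun s hs hs0 w' hw' hsw => hs0 ?_⟩
    obtain ⟨s', hs', w'', hw'', rfl⟩ := hS' hw'
    have := hinj (Set.mk_mem_prod S.zero_mem hw) (Set.mk_mem_prod (S.add_mem hs hs') hw'')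
      (by simpa [add_assoc] using hsw)
    simp only [Prod.mk.injEq] at this
    omega

theorem aperyGlue_subset_closure :
    ({0, 14, 35, 49} : Set ℕ) ⊆ AddSubmonoid.closure ({12, 14, 16, 35} : Set ℕ) := by
  have h14 : 14 ∈ AddSubmonoid.closure ({12, 14, 16, 35} : Set ℕ) :=
    AddSubmonoid.subset_closure (by simp)
  have h35 : 35 ∈ AddSubmonoid.closure ({12, 14, 16, 35} : Set ℕ) :=
    AddSubmonoid.subset_closure (by simp)
  rintro w (rfl | rfl | rfl | rfl)
  exacts [zero_mem _, h14, h35, add_mem h14 h35]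

theorem aperyGlue_generator_add_mem :
    ∀ g ∈ ({12, 14, 16, 35} : Set ℕ), ∀ w ∈ ({0, 14, 35, 49} : Set ℕ),
      g + w ∈ (AddSubmonoid.closure ({12, 16} : Set ℕ) : Set ℕ) + {0, 14, 35, 49} := by
  have hcarry : ∀ k w, w ∈ ({0, 14, 35, 49} : Set ℕ) →
      28 * k + w ∈ (AddSubmonoid.closure ({12, 16} : Set ℕ) : Set ℕ) + {0, 14, 35, 49} :=
    fun k _ hw => Set.add_mem_add ((AddSubmonoid.mem_closure_pair _ _ _).2 ⟨k, k, by simp; ring⟩) hw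
  rintro g (rfl | rfl | rfl | rfl) w hw
  · exact Set.add_mem_add (AddSubmonoid.subset_closure (by simp)) hw
  · rcases hw with rfl | rfl | rfl | rfl
    exacts [hcarry 0 14 (by simp), hcarry 1 0 (by simp), hcarry 0 49 (by simp),
      hcarry 1 35 (by simp)]
  · exact Set.add_mem_add (AddSubmonoid.subset_closure (by simp)) hw
  · rcases hw with rfl | rfl | rfl | rfl
    exacts [hcarry 0 35 (by simp), hcarry 0 49 (by simp), hcarry 2 14 (by simp),
      hcarry 3 0 (by simp)]

theorem aperyGlue_injOn_add :
    Set.InjOn (fun p : ℕ × ℕ => p.1 + p.2)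
      ((AddSubmonoid.closure ({12, 16} : Set ℕ) : Set ℕ) ×ˢ ({0, 14, 35, 49} : Set ℕ)) :=
  Nat.injOn_add_prod_of_dvd (n := 4)
    (fun _ => AddSubmonoid.dvd_of_mem_closure (by rintro g (rfl | rfl) <;> norm_num))
    (by rintro a (rfl | rfl | rfl | rfl) b (rfl | rfl | rfl | rfl) <;> simp)

/-- `Ap(⟨12,14,16,35⟩, ⟨12,16⟩) = {0, 14, 35, 49}` and every element of
`⟨12,14,16,35⟩` has a unique representation `s + w` with `s ∈ ⟨12,16⟩`, `w ∈ {0,14,35,49}`. -/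
theorem apery_glue_example :
    apery (AddSubmonoid.closure ({12, 14, 16, 35} : Set ℕ) : Set ℕ)
        (AddSubmonoid.closure ({12, 16} : Set ℕ) : Set ℕ)
      = ({0, 14, 35, 49} : Set ℕ) ∧
    ∀ x ∈ AddSubmonoid.closure ({12, 14, 16, 35} : Set ℕ), ∃! p : ℕ × ℕ,
      p.1 ∈ AddSubmonoid.closure ({12, 16} : Set ℕ) ∧
      p.2 ∈ ({0, 14, 35, 49} : Set ℕ) ∧ x = p.1 + p.2 := by
  have hdecomp := AddSubmonoid.closure_subset_add (by simp) aperyGlue_generator_add_mem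
  refine ⟨apery_eq_of_injOn_add aperyGlue_subset_closure hdecomp aperyGlue_injOn_add,
    fun x hx => ?_⟩
  obtain ⟨s, hs, w, hw, rfl⟩ := hdecomp hx
  refine ⟨(s, w), ⟨hs, hw, rfl⟩, fun p ⟨hp₁, hp₂, hp⟩ => ?_⟩
  exact aperyGlue_injOn_add ⟨hp₁, hp₂⟩ ⟨hs, hw⟩ hp.symm
end

section
/- Let S ⊆ ℕ be a numerical semigroup and s ∈ S. Suppose the numerical semigroup algebra κ[[u^S]]/κ[[u^s]] is flat and rectangular with a non-singular rectangle, in the following combinatorial sense: the minimal monomial exponents s₁, ..., sₙ (minimal nonzero Apéry numbers of S with respect to sℕ under the division order) satisfy that Ap(S, sℕ) = {ℓ₁s₁ + ⋯ + ℓₙsₙ : 0 ≤ ℓᵢ < βᵢ} with all these sums distinct, every element of S is uniquely s·ℕ + Apéry, and the associated n×n matrix B (with Bᵢᵢ = βᵢ, Bᵢⱼ = -βᵢⱼ where βᵢsᵢ = Σⱼ βᵢⱼsⱼ + tᵢ with tᵢ ∈ sℕ, 0 ≤ βᵢⱼ < βⱼ) is invertible. Then the defining ideal of S, i.e., the kernel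 of the surjection κ[X₀, Y₁, ..., Yₙ] → κ[u^S] sending X₀ ↦ u^s, Yᵢ ↦ u^{sᵢ}, is generated by the n binomials Yᵢ^{βᵢ} - X₀^{tᵢ/s} ∏ⱼ Yⱼ^{βᵢⱼ}. -/
/-!
Both monomials of each binomial have the same `u`-degree, so the binomials lie in the kernel.
Conversely, rewriting `Yᵢ^{βᵢ}` into the other monomial of the `i`-th binomial reduces every
polynomial, modulo the binomial ideal, to one supported on monomials whose `Yᵢ`-exponents are
below `βᵢ`. The rewriting terminates: non-singularity of `B` yields an integer vector `v` with
`B v > 0`, and `v`, shifted by a multiple of the `u`-degree to make it nonnegative, is a weight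
that strictly drops at every step. By flatness and the rectangle hypothesis, distinct reduced
monomials have distinct `u`-degrees, so a reduced polynomial in the kernel vanishes.
-/

open Finsupp Matrix

theorem Matrix.exists_mulVec_eq_const_pos {ι R : Type*} [Fintype ι] [DecidableEq ι] [CommRing R]
    [LinearOrder R] [IsStrictOrderedRing R] (B : Matrix ι ι R) (hB : B.det ≠ 0) :
    ∃ v : ι → R, ∃ D, 0 < D ∧ B *ᵥ v = fun _ => D :=
  ⟨B.det • B.cramer 1, B.det * B.det, mul_self_pos.2 hB, by
    rw [mulVec_smul, mulVec_cramer]; ext; simp⟩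

theorem Finsupp.weight_cons {M : Type*} [AddCommMonoid M] {n : ℕ} (a : M) (w : Fin n → M)
    (m : Fin (n + 1) →₀ ℕ) :
    weight (Fin.cons a w : Fin (n + 1) → M) m = m 0 • a + ∑ j, m j.succ • w j := by
  rw [weight_eq_sum, Fin.sum_univ_succ]
  simp

theorem exists_nat_weight_lt_of_int_weight_lt {σ ι : Type*} [Fintype σ] {l r : ι → σ →₀ ℕ}
    (w : σ → ℕ) (u : σ → ℤ) (hu : ∀ k, w k = 0 → u k = 0)
    (hw : ∀ i, weight w (l i) = weight w (r i)) (hlt : ∀ i, weight u (r i) < weight u (l i)) :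
    ∃ p : σ → ℕ, ∀ i, weight p (r i) < weight p (l i) := by
  set V := ∑ k, |u k|
  have hnonneg : ∀ k, 0 ≤ u k + V * w k := by
    intro k
    rcases Nat.eq_zero_or_pos (w k) with h | h
    · simp [hu k h, h]
    · have habs : |u k| ≤ V := Finset.single_le_sum (f := fun k => |u k|)
        (fun _ _ => abs_nonneg _) (Finset.mem_univ k)
      have hV : V ≤ V * w k := le_mul_of_one_le_right (habs.trans' (abs_nonneg _))
        (by exact_mod_cast h)
      linarith [neg_abs_le (u k)]
  refine ⟨fun k => (u k + V * w k).toNat, fun i => ?_⟩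
  have hcast : ∀ f : σ →₀ ℕ,
      (weight (fun k => (u k + V * w k).toNat) f : ℤ) = weight u f + V * weight w f := by
    intro f
    simp only [weight_eq_sum, smul_eq_mul, nsmul_eq_mul]
    push_cast
    simp only [Int.toNat_of_nonneg (hnonneg _), Finset.mul_sum, mul_add, Finset.sum_add_distrib]
    congr 1
    exact Finset.sum_congr rfl fun k _ => by ring
  have hwi : (weight w (l i) : ℤ) = weight w (r i) := congrArg _ (hw i)
  zify
  rw [hcast, hcast, hwi]
  linarith [hlt i]

namespace MvPolynomial

section CommSemiring

variable {σ R : Type*} [CommSemiring R]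

theorem aeval_X_pow_monomial (w : σ → ℕ) (m : σ →₀ ℕ) (c : R) :
    aeval (fun k => (PowerSeries.X : PowerSeries R) ^ w k) (monomial m c)
      = PowerSeries.C c * PowerSeries.X ^ weight w m := by
  rw [aeval_monomial, weight_apply, Finsupp.sum, ← Finset.prod_pow_eq_pow_sum, Finsupp.prod]
  simp [← pow_mul, mul_comm]

theorem coeff_weight_aeval_X_pow {w : σ → ℕ} {g : MvPolynomial σ R}
    (hw : Set.InjOn (weight w : (σ →₀ ℕ) → ℕ) g.support) {m : σ →₀ ℕ} (hm : m ∈ g.support) :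
    PowerSeries.coeff (weight w m) (aeval (fun k => (PowerSeries.X : PowerSeries R) ^ w k) g)
      = coeff m g := by
  conv_lhs => rw [g.as_sum]
  rw [map_sum, map_sum, Finset.sum_eq_single_of_mem m hm]
  · simp [aeval_X_pow_monomial, PowerSeries.coeff_X_pow]
  · intro m' hm' hne
    have hweight : weight w m ≠ weight w m' := fun h => hne (hw hm' hm h.symm)
    simp [aeval_X_pow_monomial, PowerSeries.coeff_X_pow, hweight]

theorem eq_zero_of_aeval_X_pow_eq_zero {w : σ → ℕ} {g : MvPolynomial σ R}
    (hw : Set.InjOn (weight w : (σ →₀ ℕ) → ℕ) g.support)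
    (hg : aeval (fun k => (PowerSeries.X : PowerSeries R) ^ w k) g = 0) : g = 0 := by
  ext m
  by_cases hm : m ∈ g.support
  · rw [← coeff_weight_aeval_X_pow hw hm, hg, map_zero, coeff_zero]
  · simpa using hm

theorem X_zero_pow_mul_prod_X_succ_pow {n : ℕ} (a : ℕ) (c : Fin n → ℕ) :
    (X 0 : MvPolynomial (Fin (n + 1)) R) ^ a * ∏ j, X j.succ ^ c j
      = monomial (equivFunOnFinite.symm (Fin.cons a c)) 1 := by
  rw [monomial_eq, Finsupp.prod_fintype _ _ fun _ => pow_zero _, Fin.prod_univ_succ]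
  simp

end CommSemiring

section CommRing

variable {σ ι R : Type*} [CommRing R]

noncomputable def binomialIdeal (l r : ι → σ →₀ ℕ) : Ideal (MvPolynomial σ R) :=
  Ideal.span (Set.range fun i => monomial (l i) 1 - monomial (r i) 1)

variable {l r : ι → σ →₀ ℕ}

theorem monomial_add_sub_monomial_add_mem_binomialIdeal (i : ι) (d : σ →₀ ℕ) (c : R) :
    monomial (l i + d) c - monomial (r i + d) c ∈ binomialIdeal l r := by
  have hfactor : monomial (l i + d) c - monomial (r i + d) c
      = (monomial (l i) 1 - monomial (r i) 1) * monomial d c := by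
    rw [sub_mul, monomial_mul, monomial_mul, one_mul]
  rw [hfactor]
  exact Ideal.mul_mem_right _ _ (Ideal.subset_span ⟨i, rfl⟩)

theorem exists_monomial_sub_mem_binomialIdeal (p : σ → ℕ)
    (hp : ∀ i, weight p (r i) < weight p (l i)) (m : σ →₀ ℕ) (c : R) :
    ∃ m', (∀ i, ¬ l i ≤ m') ∧ monomial m c - monomial m' c ∈ binomialIdeal l r := by
  induction h : weight p m using Nat.strong_induction_on generalizing m with
  | _ N ih =>
    by_cases hm : ∃ i, l i ≤ m
    swap
    · exact ⟨m, fun i hi => hm ⟨i, hi⟩, by simp⟩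
    obtain ⟨i, hi⟩ := hm
    obtain ⟨d, rfl⟩ := exists_add_of_le hi
    have hlt : weight p (r i + d) < N := by
      rw [← h, map_add, map_add]
      exact Nat.add_lt_add_right (hp i) _
    obtain ⟨m', hm', hmem⟩ := ih _ hlt (r i + d) rfl
    refine ⟨m', hm', ?_⟩
    simpa using Ideal.add_mem _ (monomial_add_sub_monomial_add_mem_binomialIdeal i d c) hmem

theorem exists_sub_mem_binomialIdeal (p : σ → ℕ) (hp : ∀ i, weight p (r i) < weight p (l i))
    (f : MvPolynomial σ R) :
    ∃ g : MvPolynomial σ R, (∀ m ∈ g.support, ∀ i, ¬ l i ≤ m) ∧ f - g ∈ binomialIdeal l r := by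
  classical
  induction f using MvPolynomial.induction_on' with
  | monomial m c =>
    obtain ⟨m', hm', hmem⟩ := exists_monomial_sub_mem_binomialIdeal p hp m c
    refine ⟨monomial m' c, fun m'' hm'' => ?_, hmem⟩
    rwa [Finset.mem_singleton.1 (support_monomial_subset hm'')]
  | add f₁ f₂ ih₁ ih₂ =>
    obtain ⟨g₁, hg₁, h₁⟩ := ih₁
    obtain ⟨g₂, hg₂, h₂⟩ := ih₂
    refine ⟨g₁ + g₂, fun m hm => ?_, by simpa [add_sub_add_comm] using Ideal.add_mem _ h₁ h₂⟩
    rcases Finset.mem_union.1 (support_add hm) with hm | hm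
    exacts [hg₁ m hm, hg₂ m hm]

theorem binomialIdeal_le_ker_aeval_X_pow (w : σ → ℕ)
    (hw : ∀ i, weight w (l i) = weight w (r i)) :
    binomialIdeal l r ≤ RingHom.ker (aeval fun k => (PowerSeries.X : PowerSeries R) ^ w k :
      MvPolynomial σ R →ₐ[R] PowerSeries R).toRingHom := by
  rw [binomialIdeal, Ideal.span_le]
  rintro _ ⟨i, rfl⟩
  simp [aeval_X_pow_monomial, hw i]

theorem ker_aeval_X_pow_eq_binomialIdeal (w p : σ → ℕ)
    (hw : ∀ i, weight w (l i) = weight w (r i)) (hp : ∀ i, weight p (r i) < weight p (l i))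
    (hinj : Set.InjOn (weight w : (σ →₀ ℕ) → ℕ) {m | ∀ i, ¬ l i ≤ m}) :
    RingHom.ker (aeval fun k => (PowerSeries.X : PowerSeries R) ^ w k :
      MvPolynomial σ R →ₐ[R] PowerSeries R).toRingHom = binomialIdeal l r := by
  refine le_antisymm (fun f hf => ?_) (binomialIdeal_le_ker_aeval_X_pow w hw)
  obtain ⟨g, hg, hfg⟩ := exists_sub_mem_binomialIdeal p hp f
  have hg0 : g = 0 := by
    refine eq_zero_of_aeval_X_pow_eq_zero (hinj.mono fun m hm => hg m hm) ?_
    have hf' : aeval (fun k => (PowerSeries.X : PowerSeries R) ^ w k) f = 0 := hf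
    have hfg' : aeval (fun k => (PowerSeries.X : PowerSeries R) ^ w k) (f - g) = 0 :=
      binomialIdeal_le_ker_aeval_X_pow w hw hfg
    rwa [map_sub, hf', zero_sub, neg_eq_zero] at hfg'
  simpa [hg0] using hfg

end CommRing

end MvPolynomial

theorem exists_sum_mul_lt_mul_of_det_ne_zero {n : ℕ} {β : Fin n → ℕ} {βo : Fin n → Fin n → ℕ}
    (hβoii : ∀ i, βo i i = 0)
    (hns : (Matrix.of fun i j : Fin n => if i = j then (β i : ℚ) else -(βo i j : ℚ)).det ≠ 0) :
    ∃ v : Fin n → ℤ, ∀ i, ∑ j, (βo i j : ℤ) * v j < β i * v i := by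
  set B : Matrix (Fin n) (Fin n) ℤ := diagonal (fun i => (β i : ℤ)) - of fun i j => (βo i j : ℤ)
  have hB : (Matrix.of fun i j : Fin n => if i = j then (β i : ℚ) else -(βo i j : ℚ))
      = B.map (↑) := by
    ext i j
    by_cases h : i = j
    · subst h; simp [B, hβoii]
    · simp [B, h]
  obtain ⟨v, D, hD, hv⟩ := B.exists_mulVec_eq_const_pos fun h => hns (by
    rw [hB, ← Int.cast_det, h, Int.cast_zero])
  refine ⟨v, fun i => ?_⟩
  have hvi := congrFun hv i
  rw [sub_mulVec, Pi.sub_apply, mulVec_diagonal] at hvi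
  simp only [mulVec, dotProduct, of_apply] at hvi
  linarith

theorem injOn_weight_cons_of_apery {S : AddSubmonoid ℕ} {s n : ℕ} {sg β : Fin n → ℕ}
    (hs : s ∈ S)
    (hapery : ∀ ℓ : Fin n → ℕ, (∀ i, ℓ i < β i) →
      ∑ i, ℓ i * sg i ∈ apery (S : Set ℕ) (AddSubmonoid.closure ({s} : Set ℕ) : Set ℕ))
    (hdist : ∀ ℓ ℓ' : Fin n → ℕ, (∀ i, ℓ i < β i) → (∀ i, ℓ' i < β i) →
      ∑ i, ℓ i * sg i = ∑ i, ℓ' i * sg i → ℓ = ℓ')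
    (hflat : ∀ x ∈ S, ∃! p : ℕ × ℕ,
      p.2 ∈ apery (S : Set ℕ) (AddSubmonoid.closure ({s} : Set ℕ) : Set ℕ) ∧
      x = p.1 * s + p.2) :
    Set.InjOn (weight (Fin.cons s sg : Fin (n + 1) → ℕ)) {m | ∀ i, m i.succ < β i} := by
  intro m hm m' hm' h
  simp only [weight_cons, smul_eq_mul] at h
  have hmS : m 0 * s + ∑ j, m j.succ * sg j ∈ S :=
    S.add_mem (by simpa using S.nsmul_mem hs (m 0)) (hapery _ hm).1
  obtain ⟨p, -, hp⟩ := hflat _ hmS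
  have hpair := (hp (m 0, _) ⟨hapery _ hm, rfl⟩).trans (hp (m' 0, _) ⟨hapery _ hm', h⟩).symm
  simp only [Prod.mk.injEq] at hpair
  have hsucc := hdist _ _ hm hm' hpair.2
  ext k
  cases k using Fin.cases with
  | zero => exact hpair.1
  | succ j => exact congrFun hsucc j

open MvPolynomial in
theorem complete_intersection_of_nonsingular_rectangle_general
    {κ : Type*} [Field κ] (S : AddSubmonoid ℕ) (s : ℕ) (hs : s ∈ S)
    (n : ℕ) (sg : Fin n → ℕ) (β βl : Fin n → ℕ) (βo : Fin n → Fin n → ℕ)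
    (hmin : ∀ i, sg i ∈ apery (S : Set ℕ) (AddSubmonoid.closure ({s} : Set ℕ) : Set ℕ) ∧
      sg i ≠ 0 ∧ ∀ w₁ ∈ S, ∀ w₂ ∈ S, sg i = w₁ + w₂ → w₁ = sg i ∨ w₂ = sg i)
    (hrect : apery (S : Set ℕ) (AddSubmonoid.closure ({s} : Set ℕ) : Set ℕ)
      = {x | ∃ ℓ : Fin n → ℕ, (∀ i, ℓ i < β i) ∧ x = ∑ i, ℓ i * sg i})
    (hdist : ∀ ℓ ℓ' : Fin n → ℕ, (∀ i, ℓ i < β i) → (∀ i, ℓ' i < β i) →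
      ∑ i, ℓ i * sg i = ∑ i, ℓ' i * sg i → ℓ = ℓ')
    (hflat : ∀ x ∈ S, ∃! p : ℕ × ℕ,
      p.2 ∈ apery (S : Set ℕ) (AddSubmonoid.closure ({s} : Set ℕ) : Set ℕ) ∧
      x = p.1 * s + p.2)
    (hβoii : ∀ i, βo i i = 0)
    (hrel : ∀ i, β i * sg i = (∑ j, βo i j * sg j) + βl i * s)
    (hns : (Matrix.of fun i j : Fin n =>
      if i = j then (β i : ℚ) else -(βo i j : ℚ)).det ≠ 0) :
    RingHom.ker ((MvPolynomial.aeval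
        (Fin.cases (PowerSeries.X ^ s) (fun i => PowerSeries.X ^ sg i) :
          Fin (n + 1) → PowerSeries κ) :
        MvPolynomial (Fin (n + 1)) κ →ₐ[κ] PowerSeries κ).toRingHom)
      = Ideal.span (Set.range fun i : Fin n =>
          (X i.succ : MvPolynomial (Fin (n + 1)) κ) ^ β i
            - X 0 ^ βl i * ∏ j, X j.succ ^ βo i j) := by
  set w : Fin (n + 1) → ℕ := Fin.cons s sg
  set l : Fin n → Fin (n + 1) →₀ ℕ := fun i => single i.succ (β i)
  set r : Fin n → Fin (n + 1) →₀ ℕ := fun i => equivFunOnFinite.symm (Fin.cons (βl i) (βo i))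
  have hF : (Fin.cases (PowerSeries.X ^ s) (fun i => PowerSeries.X ^ sg i) :
      Fin (n + 1) → PowerSeries κ) = fun k => PowerSeries.X ^ w k :=
    funext fun k => Fin.cases rfl (fun _ => rfl) k
  have hI : Ideal.span (Set.range fun i : Fin n =>
      (X i.succ : MvPolynomial (Fin (n + 1)) κ) ^ β i - X 0 ^ βl i * ∏ j, X j.succ ^ βo i j)
      = binomialIdeal l r := by
    simp only [binomialIdeal, l, r, ← X_zero_pow_mul_prod_X_succ_pow, ← X_pow_eq_monomial]
  have hw : ∀ i, weight w (l i) = weight w (r i) := fun i => by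
    simp only [w, l, r, weight_single]
    simp [weight_cons, hrel, add_comm]
  obtain ⟨v, hv⟩ := exists_sum_mul_lt_mul_of_det_ne_zero hβoii hns
  obtain ⟨p, hp⟩ := exists_nat_weight_lt_of_int_weight_lt (l := l) (r := r) w (Fin.cons 0 v)
    (fun k => Fin.cases (fun _ => rfl) (fun j hj => absurd hj (hmin j).2.1) k) hw
    (fun i => by simp only [l, r, weight_single]; simpa [weight_cons] using hv i)
  rw [hF, hI]
  refine ker_aeval_X_pow_eq_binomialIdeal w p hw hp ?_
  refine (injOn_weight_cons_of_apery hs (fun ℓ hℓ => hrect ▸ ⟨ℓ, hℓ, rfl⟩) hdist hflat).mono ?_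
  intro m hm i
  simpa [l] using hm i

open MvPolynomial in
/-- Theorem 4.6, absolute case: for a flat rectangular numerical semigroup
algebra `κ[[u^S]]/κ[[u^s]]` with a non-singular rectangle, the kernel of
`κ[X₀, Y₁, …, Yₙ] → κ[u^S]`, `X₀ ↦ u^s`, `Yᵢ ↦ u^{sᵢ}`, is generated by the `n` binomials
`Yᵢ^{βᵢ} - X₀^{λᵢ} ∏ⱼ Yⱼ^{βᵢⱼ}`. -/
theorem complete_intersection_of_nonsingular_rectangle
    {κ : Type*} [Field κ] (S : AddSubmonoid ℕ) (s : ℕ) (hs : s ∈ S) (hspos : 0 < s)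
    (n : ℕ) (sg : Fin n → ℕ) (β βl : Fin n → ℕ) (βo : Fin n → Fin n → ℕ)
    (hmin : ∀ i, sg i ∈ apery (S : Set ℕ) (AddSubmonoid.closure ({s} : Set ℕ) : Set ℕ) ∧
      sg i ≠ 0 ∧ ∀ w₁ ∈ S, ∀ w₂ ∈ S, sg i = w₁ + w₂ → w₁ = sg i ∨ w₂ = sg i)
    (hrect : apery (S : Set ℕ) (AddSubmonoid.closure ({s} : Set ℕ) : Set ℕ)
      = {x | ∃ ℓ : Fin n → ℕ, (∀ i, ℓ i < β i) ∧ x = ∑ i, ℓ i * sg i})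
    (hdist : ∀ ℓ ℓ' : Fin n → ℕ, (∀ i, ℓ i < β i) → (∀ i, ℓ' i < β i) →
      ∑ i, ℓ i * sg i = ∑ i, ℓ' i * sg i → ℓ = ℓ')
    (hflat : ∀ x ∈ S, ∃! p : ℕ × ℕ,
      p.2 ∈ apery (S : Set ℕ) (AddSubmonoid.closure ({s} : Set ℕ) : Set ℕ) ∧
      x = p.1 * s + p.2)
    (hβo : ∀ i j, βo i j < β j) (hβoii : ∀ i, βo i i = 0)
    (hrel : ∀ i, β i * sg i = (∑ j, βo i j * sg j) + βl i * s)
    (hns : (Matrix.of fun i j : Fin n =>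
      if i = j then (β i : ℚ) else -(βo i j : ℚ)).det ≠ 0) :
    RingHom.ker ((MvPolynomial.aeval
        (Fin.cases (PowerSeries.X ^ s) (fun i => PowerSeries.X ^ sg i) :
          Fin (n + 1) → PowerSeries κ) :
        MvPolynomial (Fin (n + 1)) κ →ₐ[κ] PowerSeries κ).toRingHom)
      = Ideal.span (Set.range fun i : Fin n =>
          (X i.succ : MvPolynomial (Fin (n + 1)) κ) ^ β i
            - X 0 ^ βl i * ∏ j, X j.succ ^ βo i j) :=
  complete_intersection_of_nonsingular_rectangle_general S s hs n sg β βl βo hmin hrect hdist hflat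
    hβoii hrel hns
end

section
/- For n = 2: let S ⊆ S' be numerical semigroups such that the algebra is flat and rectangular with minimal Apéry generators s₁, s₂ and rectangle size β₁ × β₂, with relations β₁s₁ = β₁₂s₂ + t₁ and β₂s₂ = β₂₁s₁ + t₂ where t₁, t₂ ∈ S, 0 ≤ β₁₂ < β₂, 0 ≤ β₂₁ < β₁. Then β₁₂ = 0 or β₂₁ = 0; i.e., the 2×2 matrix [[β₁, -β₁₂], [-β₂₁, β₂]] is triangular. -/
/-- for a flat rectangular algebra with two minimal Apéry generators,
the matrix `[[β₁, -β₁₂], [-β₂₁, β₂]]` is triangular: `β₁₂ = 0` or `β₂₁ = 0`. -/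
theorem two_generator_matrix_triangular (S S' : AddSubmonoid ℕ) (hle : S ≤ S')
    (s₁ s₂ β₁ β₂ β₁₂ β₂₁ t₁ t₂ : ℕ)
    (hmin₁ : s₁ ∈ apery (S' : Set ℕ) (S : Set ℕ) ∧ s₁ ≠ 0 ∧
      ∀ w₁ ∈ S', ∀ w₂ ∈ S', s₁ = w₁ + w₂ → w₁ = s₁ ∨ w₂ = s₁)
    (hmin₂ : s₂ ∈ apery (S' : Set ℕ) (S : Set ℕ) ∧ s₂ ≠ 0 ∧
      ∀ w₁ ∈ S', ∀ w₂ ∈ S', s₂ = w₁ + w₂ → w₁ = s₂ ∨ w₂ = s₂)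
    (hne : s₁ ≠ s₂)
    (hrect : apery (S' : Set ℕ) (S : Set ℕ)
      = {x | ∃ ℓ₁ < β₁, ∃ ℓ₂ < β₂, x = ℓ₁ * s₁ + ℓ₂ * s₂})
    (hdist : ∀ ℓ₁ < β₁, ∀ ℓ₂ < β₂, ∀ ℓ₁' < β₁, ∀ ℓ₂' < β₂,
      ℓ₁ * s₁ + ℓ₂ * s₂ = ℓ₁' * s₁ + ℓ₂' * s₂ → ℓ₁ = ℓ₁' ∧ ℓ₂ = ℓ₂')
    (hflat : ∀ x ∈ S', ∃! p : ℕ × ℕ,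
      p.1 ∈ S ∧ p.2 ∈ apery (S' : Set ℕ) (S : Set ℕ) ∧ x = p.1 + p.2)
    (ht₁ : t₁ ∈ S) (ht₂ : t₂ ∈ S) (hβ₁₂ : β₁₂ < β₂) (hβ₂₁ : β₂₁ < β₁)
    (hrel₁ : β₁ * s₁ = β₁₂ * s₂ + t₁) (hrel₂ : β₂ * s₂ = β₂₁ * s₁ + t₂) :
    β₁₂ = 0 ∨ β₂₁ = 0 := by
  by_contra h
  push_neg at h
  obtain ⟨h12, h21⟩ := h
  obtain ⟨⟨hs₁S', _⟩, hs₁0, _⟩ := hmin₁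
  obtain ⟨⟨hs₂S', _⟩, hs₂0, _⟩ := hmin₂
  set a := β₁ - β₂₁ with ha
  set b := β₂ - β₁₂ with hb
  have e1 : β₁ * s₁ = a * s₁ + β₂₁ * s₁ := by rw [← add_mul]; congr 1; omega
  have e2 : β₂ * s₂ = b * s₂ + β₁₂ * s₂ := by rw [← add_mul]; congr 1; omega
  have hkey : a * s₁ + b * s₂ = t₁ + t₂ := by
    rw [e1] at hrel₁; rw [e2] at hrel₂; linarith
  have hx : a * s₁ + b * s₂ ∈ apery (S' : Set ℕ) (S : Set ℕ) := by
    rw [hrect]; exact ⟨a, by omega, b, by omega, rfl⟩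
  have h0 : (0:ℕ) ∈ apery (S' : Set ℕ) (S : Set ℕ) := by
    refine ⟨S'.zero_mem, ?_⟩
    intro s hs hs0 w' hw' heq
    omega
  obtain ⟨p, hp, hup⟩ := hflat _ hx.1
  have r1 := hup (t₁ + t₂, 0) ⟨S.add_mem ht₁ ht₂, h0, by simpa using hkey⟩
  have r2 := hup (0, a * s₁ + b * s₂) ⟨S.zero_mem, hx, by simp⟩
  have heq : ((t₁ + t₂ : ℕ), (0:ℕ)) = ((0:ℕ), a * s₁ + b * s₂) := r1.trans r2.symm
  have : a * s₁ + b * s₂ = 0 := (Prod.ext_iff.mp heq).2.symm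
  have ha1 : a ≠ 0 := by omega
  simp [Nat.add_eq_zero, Nat.mul_eq_zero, ha1, hs₁0] at this
end
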